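/- arXiv:math/0609076 — 9 statements merged into one kernel-verified Lean document; each statement's English description precedes it below -/
import Mathlib

section
/- If x, y, z, t ∈ ℂ satisfy |x| = |y| = |z| = |t| = 1 and x + y + z + t = 0, then x ∈ {−y, −z, −t}. -/
open Complex

/-
Conjugation inverts unit complex numbers, so `x + y + z + t = 0` also gives
`x⁻¹ + y⁻¹ + z⁻¹ + t⁻¹ = 0`, i.e. `e₃(x, y, z, t) = 0`. Together with `e₁ = 0` this kills
`(x + y) (x + z) (x + t) = x² e₁ + e₃`.
-/

theorem add_mul_add_mul_add_eq_zero {R : Type*} [CommRing R] {x y z t : R}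
    (h₁ : x + y + z + t = 0) (h₃ : y * z * t + x * z * t + x * y * t + x * y * z = 0) :
    (x + y) * (x + z) * (x + t) = 0 := by
  linear_combination h₃ + x ^ 2 * h₁

theorem eq_neg_or_of_add_eq_zero_of_inv_add_eq_zero {K : Type*} [Field K] {x y z t : K}
    (hx : x ≠ 0) (hy : y ≠ 0) (hz : z ≠ 0) (ht : t ≠ 0)
    (h : x + y + z + t = 0) (h_inv : x⁻¹ + y⁻¹ + z⁻¹ + t⁻¹ = 0) :
    x = -y ∨ x = -z ∨ x = -t := by
  have h₃ : y * z * t + x * z * t + x * y * t + x * y * z = 0 := by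
    field_simp at h_inv
    linear_combination h_inv
  simpa only [mul_eq_zero, add_eq_zero_iff_eq_neg, or_assoc] using
    add_mul_add_mul_add_eq_zero h h₃

/-- If `|x| = |y| = |z| = |t| = 1` and `x + y + z + t = 0`,
then `x ∈ {−y, −z, −t}`. -/
theorem four_unit_vectors_sum_zero (x y z t : ℂ)
    (hx : ‖x‖ = 1) (hy : ‖y‖ = 1)
    (hz : ‖z‖ = 1) (ht : ‖t‖ = 1)
    (hsum : x + y + z + t = 0) :
    x = -y ∨ x = -z ∨ x = -t := by
  have ne_zero {w : ℂ} (hw : ‖w‖ = 1) : w ≠ 0 := norm_ne_zero_iff.mp (hw ▸ one_ne_zero)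
  refine eq_neg_or_of_add_eq_zero_of_inv_add_eq_zero (ne_zero hx) (ne_zero hy) (ne_zero hz)
    (ne_zero ht) hsum ?_
  rw [inv_eq_conj hx, inv_eq_conj hy, inv_eq_conj hz, inv_eq_conj ht]
  simpa only [map_add, map_zero] using congrArg (starRingEnd ℂ) hsum
end

section
/- Let H be a 6×6 complex Hadamard matrix whose first row and first column consist entirely of 1's and whose upper-left 4×4 block equals [[1,1,1,1],[1,1,x,ȳ],[1,x̄,1,z],[1,y,z̄,1]] for some complex numbers x, y, z. Then two of x, y, z must be equal, i.e. x = y or y = z or x = z. -/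
open Complex Matrix ComplexConjugate

private lemma uni_of_abs_one (w : ℂ) (h : ‖w‖ = 1) : w * conj w = 1 := by
  rw [Complex.mul_conj]
  norm_cast
  rw [Complex.normSq_eq_norm_sq, h, one_pow]

set_option maxHeartbeats 4000000 in
private lemma keylemma (x x' y y' z z' A A' C C' E E' : ℂ)
    (hx : x * x' = 1) (hy : y * y' = 1) (hz : z * z' = 1)
    (h12 : A * C' = -(2*(1 + 2*x + y'*z') + (2 + x + y')*(2 + x + z')))
    (h21 : C * A' = -(2*(1 + 2*x' + y*z) + (2 + x' + z)*(2 + x' + y)))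
    (h13 : A * E' = -(2*(1 + 2*y' + x*z) + (2 + x + y')*(2 + y' + z)))
    (h31 : E * A' = -(2*(1 + 2*y + x'*z') + (2 + y + z')*(2 + x' + y)))
    (h23 : C * E' = -(2*(1 + x'*y' + 2*z) + (2 + x' + z)*(2 + y' + z)))
    (h32 : E * C' = -(2*(1 + x*y + 2*z') + (2 + y + z')*(2 + x + z')))
    (hV1 : A * A' = 4 - (2 + x + y')*(2 + x' + y))
    (hV2 : C * C' = 4 - (2 + x' + z)*(2 + x + z'))
    (hV3 : E * E' = 4 - (2 + y + z')*(2 + y' + z))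
    (hw1 : (2 + x + y')*A' + (2 + x' + y)*A = 0)
    (hw2 : (2 + x' + z)*C' + (2 + x + z')*C = 0)
    (hw3 : (2 + y + z')*E' + (2 + y' + z)*E = 0) :
    (x - y) * (y - z) * (x - z) = 0 := by
  linear_combination
      (((32690069:ℂ)/7922880) + ((1977191:ℂ)/1188432)*z' + ((1306039:ℂ)/754560)*z + ((-99233:ℂ)/159165)*z*z' + ((-21332539:ℂ)/14261184)*z^2 + ((-281171:ℂ)/1485540)*z^2*z' + ((-3258617:ℂ)/13582080)*z^3 + ((38837219:ℂ)/23768640)*y' + ((2908369:ℂ)/4753728)*y'*z' + ((14278867:ℂ)/20373120)*y'*z + ((751459:ℂ)/7922880)*y'*z*z' + ((-12465119:ℂ)/95074560)*y'*z^2 + ((-63841:ℂ)/15845760)*y'*z^3 + ((579121:ℂ)/5942160)*y'^2 + ((966719:ℂ)/23768640)*y'^2*z + ((-63841:ℂ)/15845760)*y'^2*z^2 + ((25325693:ℂ)/47537280)*y + ((9080909:ℂ)/8913240)*y*z' + ((115184509:ℂ)/47537280)*y*z + ((38486141:ℂ)/23768640)*y*z*z' + ((3314677:ℂ)/6338304)*y*z^2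 + ((871:ℂ)/40320)*y*z^2*z' + ((119256391:ℂ)/142611840)*y*y' + ((3890011:ℂ)/11884320)*y*y'*z' + ((101584033:ℂ)/95074560)*y*y'*z + ((2320517:ℂ)/3961440)*y*y'*z*z' + ((451285:ℂ)/1584576)*y*y'*z^2 + ((-13163471:ℂ)/14261184)*y^2 + ((-133697:ℂ)/7922880)*y^2*z' + ((-21087287:ℂ)/15845760)*y^2*z + ((125683:ℂ)/5281920)*y^2*z*z' + ((-609079:ℂ)/2263680)*y^2*z^2 + ((257220751:ℂ)/47537280)*x' + ((284937409:ℂ)/71305920)*x'*z' + ((195639517:ℂ)/71305920)*x'*z + ((15203483:ℂ)/17826480)*x'*z*z' + ((1178251:ℂ)/142611840)*x'*z^2 + ((709225:ℂ)/9507456)*x'*z^2*z' + ((-86137:ℂ)/11884320)*x'*z^3 + ((289959601:ℂ)/142611840)*x'*y' + ((4832771:ℂ)/4753728)*x'*y'*z' + ((-7603037:ℂ)/71305920)*x'*y'*z + ((3835919:ℂ)/23768640)*x'*y'*z*z' + ((-34193:ℂ)/1697760)*x'*y'*z^2 + ((-21895:ℂ)/3169152)*x'*y'*z^2*z' + ((-63841:ℂ)/31691520)*x'*y'*z^3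 + ((325067:ℂ)/4753728)*x'*y'^2 + ((-21895:ℂ)/1584576)*x'*y'^2*z' + ((-2615483:ℂ)/47537280)*x'*y'^2*z + ((-21895:ℂ)/3169152)*x'*y'^2*z*z' + ((-63841:ℂ)/31691520)*x'*y'^2*z^2 + ((-13337341:ℂ)/17826480)*x'*y + ((6530585:ℂ)/7130592)*x'*y*z' + ((4557331:ℂ)/13582080)*x'*y*z + ((5218019:ℂ)/7922880)*x'*y*z*z' + ((-102649:ℂ)/452736)*x'*y*z^2 + ((15:ℂ)/224)*x'*y*z^2*z' + ((-290273:ℂ)/7922880)*x'*y*z^3 + ((48138571:ℂ)/40746240)*x'*y*y' + ((405011:ℂ)/1188432)*x'*y*y'*z' + ((1115341:ℂ)/9507456)*x'*y*y'*z + ((529:ℂ)/4032)*x'*y*y'*z*z' + ((26801:ℂ)/3961440)*x'*y*y'*z^2 + ((-53648257:ℂ)/142611840)*x'*y^2 + ((-133697:ℂ)/15845760)*x'*y^2*z' + ((22273:ℂ)/1485540)*x'*y^2*z + ((-1:ℂ)/192)*x'*y^2*z*z' + ((-1:ℂ)/192)*x'*y^2*z^2 + ((1682629:ℂ)/1485540)*x'^2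 + ((58042703:ℂ)/71305920)*x'^2*z' + ((100621523:ℂ)/285223680)*x'^2*z + ((709225:ℂ)/9507456)*x'^2*z*z' + ((-86137:ℂ)/11884320)*x'^2*z^2 + ((23602739:ℂ)/57044736)*x'^2*y' + ((11420929:ℂ)/23768640)*x'^2*y'*z' + ((173987:ℂ)/6791040)*x'^2*y'*z + ((-21895:ℂ)/3169152)*x'^2*y'*z*z' + ((-63841:ℂ)/31691520)*x'^2*y'*z^2 + ((-1849391:ℂ)/15845760)*x'^2*y'^2 + ((-21895:ℂ)/1056384)*x'^2*y'^2*z' + ((-63841:ℂ)/10563840)*x'^2*y'^2*z + ((25304501:ℂ)/142611840)*x'^2*y + ((1823443:ℂ)/15845760)*x'^2*y*z' + ((-1967:ℂ)/377280)*x'^2*y*z + ((15:ℂ)/224)*x'^2*y*z*z' + ((-290273:ℂ)/7922880)*x'^2*y*z^2 + ((6398183:ℂ)/15845760)*x'^2*y*y' + ((45:ℂ)/224)*x'^2*y*y'*z' + ((-290273:ℂ)/2640960)*x'^2*y*y'*z + ((676061:ℂ)/15845760)*x'^2*y^2 + ((-676061:ℂ)/15845760)*x'^3*y' + ((676061:ℂ)/15845760)*x'^3*y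 + ((-1:ℂ)/2)*x*z + ((-1:ℂ)/5)*x*z^2 + ((-1:ℂ)/5)*x*y*z + ((-1:ℂ)/5)*x*y*z^2 + ((-3:ℂ)/5)*x*x'*z + ((-1:ℂ)/10)*x*x'*z^2 + ((-1:ℂ)/10)*x*x'*y*z + ((-1:ℂ)/10)*x*x'^2*z) * h12 +
      (((-3127:ℂ)/2520) + ((177017:ℂ)/396144)*A*E' + ((-17793491:ℂ)/47537280)*A*C' + ((-41:ℂ)/112)*z' + ((20660767:ℂ)/95074560)*z'*A*E' + ((-18145537:ℂ)/35652960)*z'*A*C' + ((641:ℂ)/5040)*z'^2 + ((-1:ℂ)/252)*z + ((684349:ℂ)/23768640)*z*A*E' + ((-5614951:ℂ)/35652960)*z*A*C' + ((-1:ℂ)/504)*z*z' + ((-377:ℂ)/5040)*y' + ((1364599:ℂ)/19014912)*y'*A*E' + ((-39791477:ℂ)/142611840)*y'*A*C' + ((1229:ℂ)/3360)*y'*z' + ((441425:ℂ)/3169152)*y'*z'*A*E' + ((-10033091:ℂ)/47537280)*y'*z'*A*C' + ((127:ℂ)/630)*y'*z'^2 + ((293:ℂ)/1008)*y'*z + ((63841:ℂ)/15845760)*y'*z*A*E'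 + ((-141805:ℂ)/1188432)*y'*z*A*C' + ((293:ℂ)/2016)*y'*z*z' + ((275:ℂ)/1008)*y'^2 + ((461:ℂ)/1680)*y'^2*z' + ((1391:ℂ)/20160)*y'^2*z'^2 + ((295:ℂ)/2016)*y'^2*z + ((295:ℂ)/4032)*y'^2*z*z' + ((47:ℂ)/84)*y + ((7895863:ℂ)/47537280)*y*A*E' + ((9173735:ℂ)/28522368)*y*A*C' + ((127:ℂ)/336)*y*z' + ((-5483:ℂ)/352128)*y*z'*A*E' + ((-255373:ℂ)/15845760)*y*z'*A*C' + ((11:ℂ)/224)*y*z'^2 + ((47:ℂ)/336)*y*z + ((290273:ℂ)/15845760)*y*z*A*E' + ((3709423:ℂ)/47537280)*y*z*A*C' + ((47:ℂ)/672)*y*z*z' + ((47:ℂ)/168)*y*y' + ((127:ℂ)/672)*y*y'*z' + ((11:ℂ)/448)*y*y'*z'^2 + ((47:ℂ)/672)*y*y'*z + ((47:ℂ)/1344)*y*y'*z*z' + ((11:ℂ)/72)*x' + ((-11:ℂ)/288)*x'*A*C' + ((71:ℂ)/240)*x'*z' + ((676061:ℂ)/15845760)*x'*z'*A*E' + ((-79:ℂ)/1440)*x'*z'*A*C'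 + ((79:ℂ)/720)*x'*z'^2 + ((11:ℂ)/180)*x'*z + ((-11:ℂ)/720)*x'*z*A*C' + ((11:ℂ)/360)*x'*z*z' + ((233:ℂ)/720)*x'*y' + ((-60659:ℂ)/3169152)*x'*y'*A*C' + ((2:ℂ)/5)*x'*y'*z' + ((-37:ℂ)/1152)*x'*y'*z'*A*C' + ((343:ℂ)/2880)*x'*y'*z'^2 + ((169:ℂ)/1440)*x'*y'*z + ((-25:ℂ)/1152)*x'*y'*z*A*C' + ((169:ℂ)/2880)*x'*y'*z*z' + ((89:ℂ)/720)*x'*y'^2 + ((121:ℂ)/960)*x'*y'^2*z' + ((37:ℂ)/1152)*x'*y'^2*z'^2 + ((25:ℂ)/576)*x'*y'^2*z + ((25:ℂ)/1152)*x'*y'^2*z*z' + ((676061:ℂ)/15845760)*x'*y*A*E' + ((-676061:ℂ)/15845760)*x'*y*A*C' + ((-1:ℂ)/96)*x'*y*z' + ((1:ℂ)/384)*x'*y*z'*A*C' + ((-1:ℂ)/192)*x'*y*z'^2 + ((-1:ℂ)/96)*x'*y*z + ((1:ℂ)/384)*x'*y*z*A*C' + ((-1:ℂ)/192)*x'*y*z*z'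 + ((-1:ℂ)/192)*x'*y*y'*z' + ((-1:ℂ)/384)*x'*y*y'*z'^2 + ((-1:ℂ)/192)*x'*y*y'*z + ((-1:ℂ)/384)*x'*y*y'*z*z' + ((-3127:ℂ)/2520)*x + ((20997691:ℂ)/31691520)*x*A*E' + ((-563:ℂ)/10080)*x*z' + ((273293:ℂ)/1188432)*x*z'*A*E' + ((641:ℂ)/10080)*x*z'^2 + ((247:ℂ)/1260)*x*z + ((2923111:ℂ)/23768640)*x*z*A*E' + ((1:ℂ)/20)*x*z*A*C' + ((499:ℂ)/5040)*x*z*z' + ((113:ℂ)/480)*x*y' + ((1331557:ℂ)/47537280)*x*y'*A*E' + ((2399:ℂ)/5040)*x*y'*z' + ((1391:ℂ)/20160)*x*y'*z'^2 + ((47:ℂ)/120)*x*y'*z + ((63841:ℂ)/31691520)*x*y'*z*A*E' + ((2483:ℂ)/20160)*x*y'*z*z' + ((275:ℂ)/2016)*x*y'^2 + ((1391:ℂ)/20160)*x*y'^2*z' + ((295:ℂ)/4032)*x*y'^2*z + ((47:ℂ)/84)*x*y + ((7856617:ℂ)/47537280)*x*y*A*E' + ((5:ℂ)/21)*x*y*z'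 + ((11:ℂ)/448)*x*y*z'^2 + ((47:ℂ)/336)*x*y*z + ((5539:ℂ)/220080)*x*y*z*A*E' + ((47:ℂ)/1344)*x*y*z*z' + ((47:ℂ)/336)*x*y*y' + ((11:ℂ)/448)*x*y*y'*z' + ((47:ℂ)/1344)*x*y*y'*z + ((11:ℂ)/72)*x*x' + ((371:ℂ)/1440)*x*x'*z' + ((79:ℂ)/1440)*x*x'*z'^2 + ((11:ℂ)/180)*x*x'*z + ((11:ℂ)/720)*x*x'*z*z' + ((137:ℂ)/480)*x*x'*y' + ((353:ℂ)/1440)*x*x'*y'*z' + ((37:ℂ)/1152)*x*x'*y'*z'^2 + ((49:ℂ)/480)*x*x'*y'*z + ((25:ℂ)/1152)*x*x'*y'*z*z' + ((89:ℂ)/1440)*x*x'*y'^2 + ((37:ℂ)/1152)*x*x'*y'^2*z' + ((25:ℂ)/1152)*x*x'*y'^2*z + ((-1:ℂ)/96)*x*x'*y*z' + ((-1:ℂ)/384)*x*x'*y*z'^2 + ((-1:ℂ)/96)*x*x'*y*z + ((-1:ℂ)/384)*x*x'*y*z*z' + ((-1:ℂ)/384)*x*x'*y*y'*z' + ((-1:ℂ)/384)*x*x'*y*y'*z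 + ((-3127:ℂ)/10080)*x^2 + ((641:ℂ)/10080)*x^2*z' + ((1003:ℂ)/5040)*x^2*z + ((1:ℂ)/20)*x^2*z*z' + ((275:ℂ)/2016)*x^2*y' + ((1391:ℂ)/20160)*x^2*y'*z' + ((2483:ℂ)/20160)*x^2*y'*z + ((47:ℂ)/336)*x^2*y + ((11:ℂ)/448)*x^2*y*z' + ((47:ℂ)/1344)*x^2*y*z + ((11:ℂ)/288)*x^2*x' + ((79:ℂ)/1440)*x^2*x'*z' + ((11:ℂ)/720)*x^2*x'*z + ((89:ℂ)/1440)*x^2*x'*y' + ((37:ℂ)/1152)*x^2*x'*y'*z' + ((25:ℂ)/1152)*x^2*x'*y'*z + ((-1:ℂ)/384)*x^2*x'*y*z' + ((-1:ℂ)/384)*x^2*x'*y*z + ((1:ℂ)/20)*x^3*z) * h21 +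
      (((-5747333:ℂ)/880320) + ((-153939769:ℂ)/23768640)*z' + ((-135002783:ℂ)/142611840)*z'^2 + ((-195332471:ℂ)/47537280)*z + ((-83854037:ℂ)/142611840)*z*z' + ((281171:ℂ)/1485540)*z*z'^2 + ((20072923:ℂ)/47537280)*z^2 + ((3258617:ℂ)/13582080)*z^2*z' + ((-39572303:ℂ)/15845760)*y' + ((-61052893:ℂ)/23768640)*y'*z' + ((-1377637:ℂ)/3961440)*y'*z'^2 + ((-17942011:ℂ)/47537280)*y'*z + ((-1263857:ℂ)/3395520)*y'*z*z' + ((63841:ℂ)/15845760)*y'*z^2*z' + ((-56468603:ℂ)/7922880)*y + ((-899836187:ℂ)/142611840)*y*z' + ((-201310523:ℂ)/285223680)*y*z'^2 + ((-889871333:ℂ)/142611840)*y*z + ((-397059443:ℂ)/285223680)*y*z*z' + ((-871:ℂ)/40320)*y*z*z'^2 + ((-162437:ℂ)/1320480)*y*z^2 + ((-18453461:ℂ)/6791040)*y*y' + ((-3335839:ℂ)/1980720)*y*y'*z' + ((-1377637:ℂ)/7922880)*y*y'*z'^2 + ((-10837159:ℂ)/31691520)*y*y'*z + ((-704101:ℂ)/1584576)*y*y'*z*z'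 + ((-63841:ℂ)/5281920)*y*y'*z^2 + ((-45005507:ℂ)/47537280)*y^2 + ((-175690979:ℂ)/285223680)*y^2*z' + ((-281667017:ℂ)/285223680)*y^2*z + ((5483:ℂ)/117376)*y^2*z*z' + ((-290273:ℂ)/5281920)*y^2*z^2 + ((-441337:ℂ)/1131840)*y^2*y' + ((-1377637:ℂ)/7922880)*y^2*y'*z' + ((-83927:ℂ)/3169152)*y^2*y'*z + ((-129995821:ℂ)/23768640)*x' + ((-993486541:ℂ)/142611840)*x'*z' + ((-638826533:ℂ)/285223680)*x'*z'^2 + ((-264365777:ℂ)/142611840)*x'*z + ((-14219777:ℂ)/7130592)*x'*z*z' + ((-709225:ℂ)/9507456)*x'*z*z'^2 + ((-16181:ℂ)/1131840)*x'*z^2 + ((86137:ℂ)/11884320)*x'*z^2*z' + ((-62079671:ℂ)/23768640)*x'*y' + ((-45453227:ℂ)/11884320)*x'*y'*z' + ((-2925787:ℂ)/3961440)*x'*y'*z'^2 + ((-10222087:ℂ)/31691520)*x'*y'*z + ((-5170901:ℂ)/23768640)*x'*y'*z*z' + ((21895:ℂ)/3169152)*x'*y'*z*z'^2 + ((63841:ℂ)/31691520)*x'*y'*z^2*z'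 + ((-258003313:ℂ)/71305920)*x'*y + ((-308086739:ℂ)/95074560)*x'*y*z' + ((-29686759:ℂ)/71305920)*x'*y*z'^2 + ((-502810789:ℂ)/285223680)*x'*y*z + ((-29277949:ℂ)/71305920)*x'*y*z*z' + ((-15:ℂ)/224)*x'*y*z*z'^2 + ((290273:ℂ)/5281920)*x'*y*z^2 + ((290273:ℂ)/7922880)*x'*y*z^2*z' + ((-2761769:ℂ)/1509120)*x'*y*y' + ((-41626661:ℂ)/23768640)*x'*y*y'*z' + ((-331525:ℂ)/1584576)*x'*y*y'*z'^2 + ((-1271527:ℂ)/3961440)*x'*y*y'*z + ((-1683173:ℂ)/31691520)*x'*y*y'*z*z' + ((-53089777:ℂ)/142611840)*x'*y^2 + ((-1538521:ℂ)/7130592)*x'*y^2*z' + ((-20896423:ℂ)/71305920)*x'*y^2*z + ((-2263805:ℂ)/9507456)*x'*y^2*y' + ((-331525:ℂ)/1584576)*x'*y^2*y'*z' + ((-1683173:ℂ)/31691520)*x'*y^2*y'*z + ((-28063099:ℂ)/28522368)*x'^2 + ((-21139123:ℂ)/14261184)*x'^2*z' + ((-7685299:ℂ)/11884320)*x'^2*z'^2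 + ((-390559:ℂ)/2037312)*x'^2*z + ((-10702477:ℂ)/47537280)*x'^2*z*z' + ((-6385933:ℂ)/13582080)*x'^2*y' + ((-9042329:ℂ)/9507456)*x'^2*y'*z' + ((-1216625:ℂ)/3169152)*x'^2*y'*z'^2 + ((-1683173:ℂ)/15845760)*x'^2*y'*z + ((-1427809:ℂ)/15845760)*x'^2*y'*z*z' + ((-26408507:ℂ)/28522368)*x'^2*y + ((-82483001:ℂ)/142611840)*x'^2*y*z' + ((-65:ℂ)/1344)*x'^2*y*z'^2 + ((-544867:ℂ)/7130592)*x'^2*y*z + ((539:ℂ)/70740)*x'^2*y*z*z' + ((-2263805:ℂ)/9507456)*x'^2*y*y' + ((-331525:ℂ)/1584576)*x'^2*y*y'*z' + ((-1683173:ℂ)/31691520)*x'^2*y*y'*z + ((-676061:ℂ)/15845760)*x'^2*y^2 + ((-676061:ℂ)/15845760)*x'^3*z' + ((-676061:ℂ)/15845760)*x'^3*y + ((-64290367:ℂ)/15845760)*x + ((-5644753:ℂ)/4753728)*x*z' + ((-273293:ℂ)/3565296)*x*z'^2 + ((-2693321:ℂ)/880320)*x*z + ((-51855931:ℂ)/71305920)*x*z*z'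 + ((-63841:ℂ)/10563840)*x*z^2 + ((-579121:ℂ)/5942160)*x*y' + ((1331557:ℂ)/23768640)*x*y'*z' + ((-63841:ℂ)/660240)*x*y'*z + ((63841:ℂ)/15845760)*x*y'*z*z' + ((-1422311:ℂ)/528192)*x*y + ((-22471861:ℂ)/28522368)*x*y*z' + ((-273293:ℂ)/7130592)*x*y*z'^2 + ((-137393509:ℂ)/28522368)*x*y*z + ((-67011593:ℂ)/71305920)*x*y*z*z' + ((-3321919:ℂ)/7922880)*x*y*z^2 + ((1331557:ℂ)/7922880)*x*y*y' + ((1331557:ℂ)/47537280)*x*y*y'*z' + ((-81431:ℂ)/1131840)*x*y*y'*z + ((63841:ℂ)/31691520)*x*y*y'*z*z' + ((-63841:ℂ)/10563840)*x*y*y'*z^2 + ((-14673451:ℂ)/47537280)*x*y^2 + ((-273293:ℂ)/7130592)*x*y^2*z' + ((-3944467:ℂ)/5093280)*x*y^2*z + ((-5539:ℂ)/73360)*x*y^2*z^2 + ((1331557:ℂ)/47537280)*x*y^2*y' + ((63841:ℂ)/31691520)*x*y^2*y'*z + ((-268999081:ℂ)/47537280)*x*x' + ((-258219287:ℂ)/142611840)*x*x'*z'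 + ((-273293:ℂ)/2376864)*x*x'*z'^2 + ((-569383453:ℂ)/285223680)*x*x'*z + ((-5879353:ℂ)/5942160)*x*x'*z*z' + ((-2750837:ℂ)/23768640)*x*x'*z^2 + ((-183529:ℂ)/1320480)*x*x'*y' + ((221501:ℂ)/2263680)*x*x'*y'*z' + ((326311:ℂ)/47537280)*x*x'*y'*z + ((58639:ℂ)/4527360)*x*x'*y'*z*z' + ((-17222131:ℂ)/6791040)*x*x'*y + ((-60441547:ℂ)/142611840)*x*x'*y*z' + ((-1768009:ℂ)/2228310)*x*x'*y*z + ((-15:ℂ)/224)*x*x'*y*z*z' + ((90869:ℂ)/7922880)*x*x'*y*z^2 + ((-7856617:ℂ)/47537280)*x*x'*y^2 + ((-5539:ℂ)/220080)*x*x'*y^2*z + ((-12839023:ℂ)/15845760)*x*x'^2 + ((-2895569:ℂ)/9507456)*x*x'^2*z' + ((-2750837:ℂ)/23768640)*x*x'^2*z + ((258917:ℂ)/23768640)*x*x'^2*y' + ((21895:ℂ)/3169152)*x*x'^2*y'*z' + ((-14930861:ℂ)/47537280)*x*x'^2*y + ((-15:ℂ)/224)*x*x'^2*y*z' + ((90869:ℂ)/7922880)*x*x'^2*y*z)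 * h13 +
      (((-101:ℂ)/315) + ((11008103:ℂ)/15845760)*A*E' + ((247:ℂ)/504)*z' + ((30808411:ℂ)/57044736)*z'*A*E' + ((-163:ℂ)/420)*z + ((20761937:ℂ)/40746240)*z*A*E' + ((247:ℂ)/1008)*z*z' + ((-41:ℂ)/360)*z^2 + ((9:ℂ)/40)*y' + ((2008609:ℂ)/7922880)*y'*A*E' + ((727:ℂ)/840)*y'*z' + ((90583:ℂ)/1131840)*y'*z'*A*E' + ((293:ℂ)/5040)*y'*z + ((10043:ℂ)/3169152)*y'*z*A*E' + ((3127:ℂ)/10080)*y'*z*z' + ((-13:ℂ)/1260)*y'*z^2 + ((391:ℂ)/840)*y'^2 + ((239:ℂ)/480)*y'^2*z' + ((1741:ℂ)/10080)*y'^2*z + ((473:ℂ)/5040)*y'^2*z*z' + ((47:ℂ)/2016)*y'^2*z^2 + ((275:ℂ)/2016)*y'^3 + ((473:ℂ)/5040)*y'^3*z' + ((47:ℂ)/2016)*y'^3*z + ((13:ℂ)/840)*y*z' + ((-13:ℂ)/3360)*y*z'*A*E' + ((13:ℂ)/1680)*y*z*z' + ((13:ℂ)/840)*y*y'*z' + ((13:ℂ)/3360)*y*y'*z*z'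 + ((13:ℂ)/3360)*y*y'^2*z' + ((275:ℂ)/504)*x' + ((-222041:ℂ)/14261184)*x'*A*E' + ((1177:ℂ)/2520)*x'*z' + ((21644339:ℂ)/142611840)*x'*z'*A*E' + ((143:ℂ)/336)*x'*z + ((514513:ℂ)/10186560)*x'*z*A*E' + ((1177:ℂ)/5040)*x'*z*z' + ((11:ℂ)/144)*x'*z^2 + ((303:ℂ)/280)*x'*y' + ((4942993:ℂ)/47537280)*x'*y'*A*E' + ((3161:ℂ)/3360)*x'*y'*z' + ((41105:ℂ)/452736)*x'*y'*z'*A*E' + ((3487:ℂ)/5040)*x'*y'*z + ((618143:ℂ)/31691520)*x'*y'*z*A*E' + ((7129:ℂ)/20160)*x'*y'*z*z' + ((425:ℂ)/4032)*x'*y'*z^2 + ((323:ℂ)/480)*x'*y'^2 + ((62:ℂ)/105)*x'*y'^2*z' + ((773:ℂ)/2520)*x'*y'^2*z + ((955:ℂ)/8064)*x'*y'^2*z*z' + ((271:ℂ)/8064)*x'*y'^2*z^2 + ((169:ℂ)/1260)*x'*y'^3 + ((955:ℂ)/8064)*x'*y'^3*z' + ((271:ℂ)/8064)*x'*y'^3*z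 + ((25:ℂ)/672)*x'*y*z' + ((-25:ℂ)/2688)*x'*y*z'*A*E' + ((-13:ℂ)/224)*x'*y*z + ((13:ℂ)/896)*x'*y*z*A*E' + ((25:ℂ)/1344)*x'*y*z*z' + ((-13:ℂ)/448)*x'*y*z^2 + ((25:ℂ)/672)*x'*y*y'*z' + ((-13:ℂ)/224)*x'*y*y'*z + ((25:ℂ)/2688)*x'*y*y'*z*z' + ((-13:ℂ)/896)*x'*y*y'*z^2 + ((25:ℂ)/2688)*x'*y*y'^2*z' + ((-13:ℂ)/896)*x'*y*y'^2*z + ((-101:ℂ)/630)*x + ((-1039783:ℂ)/47537280)*x*A*E' + ((247:ℂ)/1008)*x*z' + ((273293:ℂ)/7130592)*x*z'*A*E' + ((-163:ℂ)/840)*x*z + ((4650997:ℂ)/20373120)*x*z*A*E' + ((247:ℂ)/2016)*x*z*z' + ((-41:ℂ)/720)*x*z^2 + ((971:ℂ)/5040)*x*y' + ((-1331557:ℂ)/47537280)*x*y'*A*E' + ((3127:ℂ)/10080)*x*y'*z' + ((1271:ℂ)/10080)*x*y'*z + ((-63841:ℂ)/31691520)*x*y'*z*A*E' + ((473:ℂ)/5040)*x*y'*z*z'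 + ((47:ℂ)/2016)*x*y'*z^2 + ((275:ℂ)/2016)*x*y'^2 + ((473:ℂ)/5040)*x*y'^2*z' + ((47:ℂ)/2016)*x*y'^2*z + ((13:ℂ)/1680)*x*y*z' + ((13:ℂ)/3360)*x*y*z*z' + ((13:ℂ)/3360)*x*y*y'*z' + ((275:ℂ)/1008)*x*x' + ((1177:ℂ)/5040)*x*x'*z' + ((143:ℂ)/672)*x*x'*z + ((1177:ℂ)/10080)*x*x'*z*z' + ((11:ℂ)/288)*x*x'*z^2 + ((4079:ℂ)/10080)*x*x'*y' + ((7129:ℂ)/20160)*x*x'*y'*z' + ((4829:ℂ)/20160)*x*x'*y'*z + ((955:ℂ)/8064)*x*x'*y'*z*z' + ((271:ℂ)/8064)*x*x'*y'*z^2 + ((169:ℂ)/1260)*x*x'*y'^2 + ((955:ℂ)/8064)*x*x'*y'^2*z' + ((271:ℂ)/8064)*x*x'*y'^2*z + ((25:ℂ)/1344)*x*x'*y*z' + ((-13:ℂ)/448)*x*x'*y*z + ((25:ℂ)/2688)*x*x'*y*z*z' + ((-13:ℂ)/896)*x*x'*y*z^2 + ((25:ℂ)/2688)*x*x'*y*y'*z'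 + ((-13:ℂ)/896)*x*x'*y*y'*z) * h31 +
      (((27090097:ℂ)/7922880) + ((-56281:ℂ)/528192)*A*C' + ((27090097:ℂ)/5942160)*z' + ((281171:ℂ)/1485540)*z'*A*C' + ((27090097:ℂ)/47537280)*z'^2 + ((1430603:ℂ)/660240)*z + ((3258617:ℂ)/13582080)*z*A*C' + ((1430603:ℂ)/495180)*z*z' + ((1430603:ℂ)/3961440)*z*z'^2 + ((200920787:ℂ)/47537280)*y' + ((-579121:ℂ)/11884320)*y'*A*C' + ((695729129:ℂ)/142611840)*y'*z' + ((158436707:ℂ)/285223680)*y'*z'^2 + ((4241543:ℂ)/23768640)*y'*z + ((63841:ℂ)/15845760)*y'*z*A*C' + ((63841:ℂ)/396144)*y'*z*z' + ((63841:ℂ)/3169152)*y'*z*z'^2 + ((1364599:ℂ)/9507456)*y'^2 + ((441425:ℂ)/1584576)*y'^2*z' + ((63841:ℂ)/7922880)*y'^2*z + ((28462231:ℂ)/6791040)*y + ((-26193479:ℂ)/95074560)*y*A*C' + ((19769213:ℂ)/5093280)*y*z' + ((-871:ℂ)/40320)*y*z'*A*C' + ((14653049:ℂ)/40746240)*y*z'^2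 + ((18082153:ℂ)/11884320)*y*z + ((1782673:ℂ)/1320480)*y*z*z' + ((489677:ℂ)/3961440)*y*z*z'^2 + ((4142957:ℂ)/2037312)*y*y' + ((36374131:ℂ)/35652960)*y*y'*z' + ((1352153:ℂ)/11884320)*y*y'*z + ((63841:ℂ)/3169152)*y*y'*z*z' + ((1364599:ℂ)/19014912)*y*y'^2 + ((441425:ℂ)/3169152)*y*y'^2*z' + ((63841:ℂ)/15845760)*y*y'^2*z + ((149946521:ℂ)/142611840)*y^2 + ((93688883:ℂ)/285223680)*y^2*z' + ((321283:ℂ)/1131840)*y^2*z + ((489677:ℂ)/3961440)*y^2*z*z' + ((7895863:ℂ)/47537280)*y^2*y' + ((-5483:ℂ)/352128)*y^2*y'*z' + ((290273:ℂ)/15845760)*y^2*y'*z + ((9327481:ℂ)/23768640)*x' + ((-936071:ℂ)/6338304)*x'*A*C' + ((-33334171:ℂ)/142611840)*x'*z' + ((-709225:ℂ)/9507456)*x'*z'*A*C' + ((-11914559:ℂ)/142611840)*x'*z'^2 + ((1201171:ℂ)/11884320)*x'*z + ((86137:ℂ)/11884320)*x'*z*A*C' + ((86137:ℂ)/1485540)*x'*z*z'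 + ((86137:ℂ)/11884320)*x'*z*z'^2 + ((1642043:ℂ)/2263680)*x'*y' + ((1849391:ℂ)/47537280)*x'*y'*A*C' + ((217119941:ℂ)/285223680)*x'*y'*z' + ((21895:ℂ)/3169152)*x'*y'*z'*A*C' + ((1604467:ℂ)/71305920)*x'*y'*z'^2 + ((2326313:ℂ)/47537280)*x'*y'*z + ((63841:ℂ)/31691520)*x'*y'*z*A*C' + ((63841:ℂ)/3961440)*x'*y'*z*z' + ((63841:ℂ)/31691520)*x'*y'*z*z'^2 + ((1364599:ℂ)/19014912)*x'*y'^2 + ((441425:ℂ)/3169152)*x'*y'^2*z' + ((63841:ℂ)/15845760)*x'*y'^2*z + ((21108349:ℂ)/71305920)*x'*y + ((-1768561:ℂ)/11884320)*x'*y*A*C' + ((20707493:ℂ)/142611840)*x'*y*z' + ((-15:ℂ)/224)*x'*y*z'*A*C' + ((444539:ℂ)/20373120)*x'*y*z'^2 + ((6440281:ℂ)/23768640)*x'*y*z + ((290273:ℂ)/7922880)*x'*y*z*A*C' + ((3569413:ℂ)/11884320)*x'*y*z*z' + ((290273:ℂ)/7922880)*x'*y*z*z'^2 + ((8454911:ℂ)/28522368)*x'*y*y'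 + ((1768217:ℂ)/35652960)*x'*y*y'*z' + ((19673:ℂ)/880320)*x'*y*y'*z + ((63841:ℂ)/31691520)*x'*y*y'*z*z' + ((4598161:ℂ)/35652960)*x'*y^2 + ((444539:ℂ)/20373120)*x'*y^2*z' + ((290273:ℂ)/3961440)*x'*y^2*z + ((290273:ℂ)/7922880)*x'*y^2*z*z' + ((676061:ℂ)/15845760)*x'*y^2*y' + ((676061:ℂ)/7922880)*x'^2*z' + ((676061:ℂ)/15845760)*x'^2*y'*z' + ((676061:ℂ)/7922880)*x'^2*y + ((676061:ℂ)/15845760)*x'^2*y*y' + ((6904591:ℂ)/3395520)*x + ((426347:ℂ)/424440)*x*z' + ((47934571:ℂ)/11884320)*x*z + ((7978183:ℂ)/1697760)*x*z*z' + ((3222217:ℂ)/5942160)*x*z*z'^2 + ((357815789:ℂ)/142611840)*x*y' + ((22814857:ℂ)/19014912)*x*y'*z' + ((-239741:ℂ)/20373120)*x*y'*z'^2 + ((18012703:ℂ)/47537280)*x*y'*z + ((702251:ℂ)/5281920)*x*y'*z*z' + ((63841:ℂ)/4527360)*x*y'*z*z'^2 + ((1331557:ℂ)/23768640)*x*y'^2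 + ((63841:ℂ)/15845760)*x*y'^2*z + ((625973609:ℂ)/142611840)*x*y + ((967559:ℂ)/1188432)*x*y*z' + ((-1707427:ℂ)/71305920)*x*y*z'^2 + ((9895399:ℂ)/2971080)*x*y*z + ((17484857:ℂ)/11884320)*x*y*z*z' + ((5539:ℂ)/55020)*x*y*z*z'^2 + ((157660733:ℂ)/57044736)*x*y*y' + ((3641507:ℂ)/10186560)*x*y*y'*z' + ((6417811:ℂ)/23768640)*x*y*y'*z + ((63841:ℂ)/4527360)*x*y*y'*z*z' + ((1331557:ℂ)/47537280)*x*y*y'^2 + ((63841:ℂ)/31691520)*x*y*y'^2*z + ((87141839:ℂ)/57044736)*x*y^2 + ((-805067:ℂ)/20373120)*x*y^2*z' + ((10154477:ℂ)/15845760)*x*y^2*z + ((5539:ℂ)/55020)*x*y^2*z*z' + ((7856617:ℂ)/47537280)*x*y^2*y' + ((5539:ℂ)/220080)*x*y^2*y'*z + ((32696603:ℂ)/20373120)*x*x' + ((193672019:ℂ)/285223680)*x*x'*z' + ((6875119:ℂ)/23768640)*x*x'*z + ((86137:ℂ)/11884320)*x*x'*z*z' + ((7445707:ℂ)/8913240)*x*x'*y'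 + ((55868219:ℂ)/142611840)*x*x'*y'*z' + ((6420791:ℂ)/47537280)*x*x'*y'*z + ((63841:ℂ)/31691520)*x*x'*y'*z*z' + ((1331557:ℂ)/47537280)*x*x'*y'^2 + ((63841:ℂ)/31691520)*x*x'*y'^2*z + ((26738129:ℂ)/71305920)*x*x'*y + ((6975707:ℂ)/142611840)*x*x'*y*z' + ((2593529:ℂ)/15845760)*x*x'*y*z + ((290273:ℂ)/7922880)*x*x'*y*z*z' + ((526931:ℂ)/2263680)*x*x'*y*y' + ((329713:ℂ)/10563840)*x*x'*y*y'*z + ((1284989:ℂ)/11884320)*x*x'*y^2 + ((290273:ℂ)/2640960)*x*x'*y^2*z + ((676061:ℂ)/15845760)*x*x'^2*z' + ((676061:ℂ)/15845760)*x*x'^2*y + ((20997691:ℂ)/15845760)*x^2 + ((273293:ℂ)/594216)*x^2*z' + ((15811979:ℂ)/11884320)*x^2*z + ((3222217:ℂ)/5942160)*x^2*z*z' + ((579121:ℂ)/17826480)*x^2*y' + ((-239741:ℂ)/20373120)*x^2*y'*z' + ((63841:ℂ)/1980720)*x^2*y'*z + ((63841:ℂ)/4527360)*x^2*y'*z*z'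 + ((269599207:ℂ)/285223680)*x^2*y + ((14690153:ℂ)/71305920)*x^2*y*z' + ((9514367:ℂ)/4753728)*x^2*y*z + ((5539:ℂ)/55020)*x^2*y*z*z' + ((-34663:ℂ)/4753728)*x^2*y*y' + ((702251:ℂ)/15845760)*x^2*y*y'*z + ((4441763:ℂ)/47537280)*x^2*y^2 + ((72007:ℂ)/220080)*x^2*y^2*z + ((20997691:ℂ)/31691520)*x^2*x' + ((273293:ℂ)/1188432)*x^2*x'*z' + ((2923111:ℂ)/23768640)*x^2*x'*z + ((1331557:ℂ)/47537280)*x^2*x'*y' + ((63841:ℂ)/31691520)*x^2*x'*y'*z + ((7856617:ℂ)/47537280)*x^2*x'*y + ((5539:ℂ)/220080)*x^2*x'*y*z) * h23 +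
      (((-27090097:ℂ)/47537280)*C*E' + ((-1430603:ℂ)/3961440)*z*C*E' + ((-158436707:ℂ)/285223680)*y'*C*E' + ((-63841:ℂ)/3169152)*y'*z*C*E' + ((-14653049:ℂ)/40746240)*y*C*E' + ((-489677:ℂ)/3961440)*y*z*C*E' + ((11914559:ℂ)/142611840)*x'*C*E' + ((-86137:ℂ)/11884320)*x'*z*C*E' + ((-1604467:ℂ)/71305920)*x'*y'*C*E' + ((-63841:ℂ)/31691520)*x'*y'*z*C*E' + ((-444539:ℂ)/20373120)*x'*y*C*E' + ((-290273:ℂ)/7922880)*x'*y*z*C*E' + ((-3222217:ℂ)/5942160)*x*z*C*E' + ((239741:ℂ)/20373120)*x*y'*C*E' + ((-63841:ℂ)/4527360)*x*y'*z*C*E' + ((1707427:ℂ)/71305920)*x*y*C*E' + ((-5539:ℂ)/55020)*x*y*z*C*E') * h32 +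
      (((-177017:ℂ)/396144)*C*E' + ((7615409:ℂ)/11884320)*z' + ((-20660767:ℂ)/95074560)*z'*C*E' + ((2959253:ℂ)/47537280)*z'^2 + ((7615409:ℂ)/11884320)*z + ((-684349:ℂ)/23768640)*z*C*E' + ((12915347:ℂ)/11884320)*z*z' + ((2959253:ℂ)/95074560)*z*z'^2 + ((33471317:ℂ)/47537280)*z^2 + ((33471317:ℂ)/95074560)*z^2*z' + ((11008103:ℂ)/7922880)*y' + ((-1364599:ℂ)/19014912)*y'*C*E' + ((7682561:ℂ)/4456620)*y'*z' + ((-441425:ℂ)/3169152)*y'*z'*C*E' + ((15859759:ℂ)/57044736)*y'*z'^2 + ((138060529:ℂ)/142611840)*y'*z + ((-63841:ℂ)/15845760)*y'*z*C*E' + ((-2941391:ℂ)/285223680)*y'*z*z' + ((-1245721:ℂ)/9507456)*y'*z*z'^2 + ((-1104311:ℂ)/4753728)*y'*z^2 + ((-1104311:ℂ)/9507456)*y'*z^2*z' + ((2008609:ℂ)/3961440)*y'^2 + ((1092257:ℂ)/2640960)*y'^2*z' + ((90583:ℂ)/1131840)*y'^2*z'^2 + ((10043:ℂ)/1584576)*y'^2*z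 + ((10043:ℂ)/3169152)*y'^2*z*z' + ((11008103:ℂ)/7922880)*y + ((-7895863:ℂ)/47537280)*y*C*E' + ((49155881:ℂ)/28522368)*y*z' + ((5483:ℂ)/352128)*y*z'*C*E' + ((-316681:ℂ)/7922880)*y*z'^2 + ((12005137:ℂ)/5093280)*y*z + ((-290273:ℂ)/15845760)*y*z*C*E' + ((55778393:ℂ)/57044736)*y*z*z' + ((-316681:ℂ)/15845760)*y*z*z'^2 + ((37969327:ℂ)/57044736)*y*z^2 + ((3709423:ℂ)/47537280)*y*z^2*z' + ((6347513:ℂ)/5281920)*y*y' + ((197488799:ℂ)/285223680)*y*y'*z' + ((-13:ℂ)/3360)*y*y'*z'^2 + ((219451223:ℂ)/285223680)*y*y'*z + ((90583:ℂ)/1131840)*y*y'*z*z' + ((10043:ℂ)/3169152)*y*y'*z^2 + ((2008609:ℂ)/7922880)*y*y'^2 + ((90583:ℂ)/1131840)*y*y'^2*z' + ((10043:ℂ)/3169152)*y*y'^2*z + ((-13:ℂ)/1680)*y^2*z' + ((-13:ℂ)/3360)*y^2*z*z' + ((-13:ℂ)/3360)*y^2*y'*z' + ((-17793491:ℂ)/23768640)*x'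 + ((-71293183:ℂ)/47537280)*x'*z' + ((-676061:ℂ)/15845760)*x'*z'*C*E' + ((-2496731:ℂ)/7922880)*x'*z'^2 + ((-557911:ℂ)/1320480)*x'*z + ((67523:ℂ)/1273320)*x'*z*z' + ((2764099:ℂ)/28522368)*x'*z*z'^2 + ((71777:ℂ)/1018656)*x'*z^2 + ((71777:ℂ)/2037312)*x'*z^2*z' + ((-42011887:ℂ)/71305920)*x'*y' + ((-1286041:ℂ)/5281920)*x'*y'*z' + ((4140193:ℂ)/71305920)*x'*y'*z'^2 + ((163279:ℂ)/5093280)*x'*y'*z + ((18394763:ℂ)/142611840)*x'*y'*z*z' + ((6641:ℂ)/113184)*x'*y'*z*z'^2 + ((-69607:ℂ)/15845760)*x'*y'*z^2 + ((-69607:ℂ)/31691520)*x'*y'*z^2*z' + ((4942993:ℂ)/23768640)*x'*y'^2 + ((13575043:ℂ)/47537280)*x'*y'^2*z' + ((41105:ℂ)/452736)*x'*y'^2*z'^2 + ((618143:ℂ)/15845760)*x'*y'^2*z + ((618143:ℂ)/31691520)*x'*y'^2*z*z' + ((8729653:ℂ)/14261184)*x'*y + ((-676061:ℂ)/15845760)*x'*y*C*E'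 + ((72391541:ℂ)/142611840)*x'*y*z' + ((-66799:ℂ)/2263680)*x'*y*z'^2 + ((11136697:ℂ)/71305920)*x'*y*z + ((29659139:ℂ)/142611840)*x'*y*z*z' + ((-3:ℂ)/448)*x'*y*z*z'^2 + ((6042121:ℂ)/71305920)*x'*y*z^2 + ((23:ℂ)/1344)*x'*y*z^2*z' + ((6859387:ℂ)/35652960)*x'*y*y' + ((44887739:ℂ)/142611840)*x'*y*y'*z' + ((-25:ℂ)/2688)*x'*y*y'*z'^2 + ((15866869:ℂ)/71305920)*x'*y*y'*z + ((83429:ℂ)/792288)*x'*y*y'*z*z' + ((618143:ℂ)/31691520)*x'*y*y'*z^2 + ((4942993:ℂ)/47537280)*x'*y*y'^2 + ((41105:ℂ)/452736)*x'*y*y'^2*z' + ((618143:ℂ)/31691520)*x'*y*y'^2*z + ((-25:ℂ)/1344)*x'*y^2*z' + ((13:ℂ)/448)*x'*y^2*z + ((-25:ℂ)/2688)*x'*y^2*z*z' + ((13:ℂ)/896)*x'*y^2*z^2 + ((-25:ℂ)/2688)*x'*y^2*y'*z' + ((13:ℂ)/896)*x'*y^2*y'*z + ((-11:ℂ)/144)*x'^2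 + ((-71:ℂ)/480)*x'^2*z' + ((-79:ℂ)/1440)*x'^2*z'^2 + ((-11:ℂ)/360)*x'^2*z + ((-11:ℂ)/720)*x'^2*z*z' + ((-60659:ℂ)/1584576)*x'^2*y' + ((-264233:ℂ)/3169152)*x'^2*y'*z' + ((-37:ℂ)/1152)*x'^2*y'*z'^2 + ((-25:ℂ)/576)*x'^2*y'*z + ((-25:ℂ)/1152)*x'^2*y'*z*z' + ((-676061:ℂ)/7922880)*x'^2*y + ((-593531:ℂ)/15845760)*x'^2*y*z' + ((1:ℂ)/384)*x'^2*y*z'^2 + ((1:ℂ)/192)*x'^2*y*z + ((1:ℂ)/384)*x'^2*y*z*z' + ((-17793491:ℂ)/23768640)*x + ((-20997691:ℂ)/31691520)*x*C*E' + ((-75701497:ℂ)/71305920)*x*z' + ((-273293:ℂ)/1188432)*x*z'*C*E' + ((273293:ℂ)/3565296)*x*z'^2 + ((-104538779:ℂ)/142611840)*x*z + ((-2923111:ℂ)/23768640)*x*z*C*E' + ((973691:ℂ)/9507456)*x*z*z' + ((273293:ℂ)/7130592)*x*z*z'^2 + ((28457669:ℂ)/71305920)*x*z^2 + ((5669653:ℂ)/20373120)*x*z^2*z'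 + ((-3065059:ℂ)/5093280)*x*y' + ((-1331557:ℂ)/47537280)*x*y'*C*E' + ((-60375517:ℂ)/142611840)*x*y'*z' + ((273293:ℂ)/7130592)*x*y'*z'^2 + ((-795241:ℂ)/6791040)*x*y'*z + ((-63841:ℂ)/31691520)*x*y'*z*C*E' + ((-1055767:ℂ)/71305920)*x*y'*z*z' + ((-5863723:ℂ)/47537280)*x*y'*z^2 + ((-63841:ℂ)/31691520)*x*y'*z^2*z' + ((-1331557:ℂ)/23768640)*x*y'^2 + ((-1331557:ℂ)/47537280)*x*y'^2*z' + ((-63841:ℂ)/15845760)*x*y'^2*z + ((-63841:ℂ)/31691520)*x*y'^2*z*z' + ((21374663:ℂ)/35652960)*x*y + ((-7856617:ℂ)/47537280)*x*y*C*E' + ((3167503:ℂ)/71305920)*x*y*z' + ((1032697:ℂ)/1131840)*x*y*z + ((-5539:ℂ)/220080)*x*y*z*C*E' + ((3167503:ℂ)/142611840)*x*y*z*z' + ((341291:ℂ)/1114155)*x*y*z^2 + ((-411433:ℂ)/5281920)*x*y*y' + ((273293:ℂ)/7130592)*x*y*y'*z' + ((27987739:ℂ)/142611840)*x*y*y'*z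 + ((-63841:ℂ)/31691520)*x*y*y'*z^2 + ((-1331557:ℂ)/47537280)*x*y*y'^2 + ((-63841:ℂ)/31691520)*x*y*y'^2*z + ((-21424811:ℂ)/47537280)*x*x' + ((-22057459:ℂ)/35652960)*x*x'*z' + ((-1125199:ℂ)/8913240)*x*x'*z + ((-7:ℂ)/1440)*x*x'*z*z' + ((-11:ℂ)/720)*x*x'*z^2 + ((-45250787:ℂ)/142611840)*x*x'*y' + ((-13086701:ℂ)/47537280)*x*x'*y'*z' + ((-1729067:ℂ)/9507456)*x*x'*y'*z + ((-37:ℂ)/1152)*x*x'*y'*z*z' + ((-25:ℂ)/1152)*x*x'*y'*z^2 + ((33699577:ℂ)/142611840)*x*x'*y + ((-172843:ℂ)/15845760)*x*x'*y*z' + ((192883:ℂ)/4753728)*x*x'*y*z + ((1:ℂ)/384)*x*x'*y*z*z' + ((1:ℂ)/384)*x*x'*y*z^2 + ((-11:ℂ)/288)*x*x'^2 + ((-79:ℂ)/1440)*x*x'^2*z' + ((-11:ℂ)/720)*x*x'^2*z + ((-60659:ℂ)/3169152)*x*x'^2*y' + ((-37:ℂ)/1152)*x*x'^2*y'*z' +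 ((-25:ℂ)/1152)*x*x'^2*y'*z + ((-676061:ℂ)/15845760)*x*x'^2*y + ((1:ℂ)/384)*x*x'^2*y*z' + ((1:ℂ)/384)*x*x'^2*y*z + ((1:ℂ)/10)*x^2*z + ((1:ℂ)/20)*x^2*z^2 + ((1:ℂ)/20)*x^2*x'*z) * hV1 +
      (((56281:ℂ)/528192)*A*E' + ((17793491:ℂ)/47537280)*A*A' + ((-27090097:ℂ)/23768640)*z' + ((-281171:ℂ)/1485540)*z'*A*E' + ((18145537:ℂ)/35652960)*z'*A*A' + ((-27090097:ℂ)/23768640)*z + ((-3258617:ℂ)/13582080)*z*A*E' + ((5614951:ℂ)/35652960)*z*A*A' + ((-61424569:ℂ)/47537280)*z*z' + ((-1430603:ℂ)/1980720)*z^2 + ((-1430603:ℂ)/3961440)*z^2*z' + ((-27090097:ℂ)/23768640)*y' + ((579121:ℂ)/11884320)*y'*A*E' + ((39791477:ℂ)/142611840)*y'*A*A' + ((-119853499:ℂ)/71305920)*y'*z' + ((10033091:ℂ)/47537280)*y'*z'*A*A' + ((-37348589:ℂ)/20373120)*y'*z + ((-63841:ℂ)/15845760)*y'*z*A*E' + ((141805:ℂ)/1188432)*y'*z*A*A'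 + ((-272931503:ℂ)/285223680)*y'*z*z' + ((-63841:ℂ)/1584576)*y'*z^2 + ((-63841:ℂ)/3169152)*y'*z^2*z' + ((-158436707:ℂ)/142611840)*y'^2 + ((-158436707:ℂ)/285223680)*y'^2*z' + ((-63841:ℂ)/1584576)*y'^2*z + ((-63841:ℂ)/3169152)*y'^2*z*z' + ((-27090097:ℂ)/23768640)*y + ((26193479:ℂ)/95074560)*y*A*E' + ((-9173735:ℂ)/28522368)*y*A*A' + ((-14653049:ℂ)/20373120)*y*z' + ((871:ℂ)/40320)*y*z'*A*E' + ((255373:ℂ)/15845760)*y*z'*A*A' + ((-28684505:ℂ)/14261184)*y*z + ((-3709423:ℂ)/47537280)*y*z*A*A' + ((-173084831:ℂ)/285223680)*y*z*z' + ((-267773:ℂ)/440160)*y*z^2 + ((-489677:ℂ)/3961440)*y*z^2*z' + ((-342278341:ℂ)/142611840)*y*y' + ((-14653049:ℂ)/40746240)*y*y'*z' + ((-343444991:ℂ)/285223680)*y*y'*z + ((-489677:ℂ)/3961440)*y*y'*z*z' + ((-63841:ℂ)/3169152)*y*y'*z^2 + ((-158436707:ℂ)/285223680)*y*y'^2 +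 ((-63841:ℂ)/3169152)*y*y'^2*z + ((-14653049:ℂ)/20373120)*y^2 + ((-173084831:ℂ)/285223680)*y^2*z + ((-489677:ℂ)/3961440)*y^2*z^2 + ((-14653049:ℂ)/40746240)*y^2*y' + ((-489677:ℂ)/3961440)*y^2*y'*z + ((936071:ℂ)/6338304)*x'*A*E' + ((11:ℂ)/288)*x'*A*A' + ((11914559:ℂ)/71305920)*x'*z' + ((709225:ℂ)/9507456)*x'*z'*A*E' + ((79:ℂ)/1440)*x'*z'*A*A' + ((11914559:ℂ)/71305920)*x'*z + ((-86137:ℂ)/11884320)*x'*z*A*E' + ((11:ℂ)/720)*x'*z*A*A' + ((1406753:ℂ)/20373120)*x'*z*z' + ((-86137:ℂ)/5942160)*x'*z^2 + ((-86137:ℂ)/11884320)*x'*z^2*z' + ((11914559:ℂ)/71305920)*x'*y' + ((-1849391:ℂ)/47537280)*x'*y'*A*E' + ((60659:ℂ)/3169152)*x'*y'*A*A' + ((5496691:ℂ)/142611840)*x'*y'*z' + ((-21895:ℂ)/3169152)*x'*y'*z'*A*E' + ((37:ℂ)/1152)*x'*y'*z'*A*A' + ((-2121289:ℂ)/35652960)*x'*y'*z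 + ((-63841:ℂ)/31691520)*x'*y'*z*A*E' + ((25:ℂ)/1152)*x'*y'*z*A*A' + ((-4817147:ℂ)/142611840)*x'*y'*z*z' + ((-63841:ℂ)/15845760)*x'*y'*z^2 + ((-63841:ℂ)/31691520)*x'*y'*z^2*z' + ((-1604467:ℂ)/35652960)*x'*y'^2 + ((-1604467:ℂ)/71305920)*x'*y'^2*z' + ((-63841:ℂ)/15845760)*x'*y'^2*z + ((-63841:ℂ)/31691520)*x'*y'^2*z*z' + ((11914559:ℂ)/71305920)*x'*y + ((1768561:ℂ)/11884320)*x'*y*A*E' + ((676061:ℂ)/15845760)*x'*y*A*A' + ((-444539:ℂ)/10186560)*x'*y*z' + ((15:ℂ)/224)*x'*y*z'*A*E' + ((-1:ℂ)/384)*x'*y*z'*A*A' + ((103535:ℂ)/4074624)*x'*y*z + ((-290273:ℂ)/7922880)*x'*y*z*A*E' + ((-1:ℂ)/384)*x'*y*z*A*A' + ((-13561601:ℂ)/142611840)*x'*y*z*z' + ((-34177:ℂ)/424440)*x'*y*z^2 + ((-290273:ℂ)/7922880)*x'*y*z^2*z' + ((-48457:ℂ)/9507456)*x'*y*y' + ((-444539:ℂ)/20373120)*x'*y*y'*z'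 + ((-3053395:ℂ)/28522368)*x'*y*y'*z + ((-290273:ℂ)/7922880)*x'*y*y'*z*z' + ((-63841:ℂ)/31691520)*x'*y*y'*z^2 + ((-1604467:ℂ)/71305920)*x'*y*y'^2 + ((-63841:ℂ)/31691520)*x'*y*y'^2*z + ((-444539:ℂ)/10186560)*x'*y^2 + ((-13561601:ℂ)/142611840)*x'*y^2*z + ((-290273:ℂ)/7922880)*x'*y^2*z^2 + ((-444539:ℂ)/20373120)*x'*y^2*y' + ((-290273:ℂ)/7922880)*x'*y^2*y'*z + ((-1:ℂ)/20)*x*z*A*A' + ((-3222217:ℂ)/2971080)*x*z*z' + ((-3222217:ℂ)/2971080)*x*z^2 + ((-3222217:ℂ)/5942160)*x*z^2*z' + ((239741:ℂ)/10186560)*x*y'*z' + ((-75655021:ℂ)/71305920)*x*y'*z + ((-19919251:ℂ)/35652960)*x*y'*z*z' + ((-63841:ℂ)/2263680)*x*y'*z^2 + ((-63841:ℂ)/4527360)*x*y'*z^2*z' + ((239741:ℂ)/10186560)*x*y'^2 + ((239741:ℂ)/20373120)*x*y'^2*z' + ((-63841:ℂ)/2263680)*x*y'^2*z + ((-63841:ℂ)/4527360)*x*y'^2*z*z'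 + ((1707427:ℂ)/35652960)*x*y*z' + ((-36959177:ℂ)/35652960)*x*y*z + ((-12649661:ℂ)/71305920)*x*y*z*z' + ((-4418641:ℂ)/5942160)*x*y*z^2 + ((-5539:ℂ)/55020)*x*y*z^2*z' + ((5093041:ℂ)/71305920)*x*y*y' + ((1707427:ℂ)/71305920)*x*y*y'*z' + ((-5419559:ℂ)/7130592)*x*y*y'*z + ((-5539:ℂ)/55020)*x*y*y'*z*z' + ((-63841:ℂ)/4527360)*x*y*y'*z^2 + ((239741:ℂ)/20373120)*x*y*y'^2 + ((-63841:ℂ)/4527360)*x*y*y'^2*z + ((1707427:ℂ)/35652960)*x*y^2 + ((-12649661:ℂ)/71305920)*x*y^2*z + ((-5539:ℂ)/55020)*x*y^2*z^2 + ((1707427:ℂ)/71305920)*x*y^2*y' + ((-5539:ℂ)/55020)*x*y^2*y'*z) * hV2 +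
      (((27090097:ℂ)/47537280)*C*C' + ((-11008103:ℂ)/15845760)*A*A' + ((-30808411:ℂ)/57044736)*z'*A*A' + ((1430603:ℂ)/3961440)*z*C*C' + ((-20761937:ℂ)/40746240)*z*A*A' + ((158436707:ℂ)/285223680)*y'*C*C' + ((-2008609:ℂ)/7922880)*y'*A*A' + ((-90583:ℂ)/1131840)*y'*z'*A*A' + ((63841:ℂ)/3169152)*y'*z*C*C' + ((-10043:ℂ)/3169152)*y'*z*A*A' + ((14653049:ℂ)/40746240)*y*C*C' + ((13:ℂ)/3360)*y*z'*A*A' + ((489677:ℂ)/3961440)*y*z*C*C' + ((-11914559:ℂ)/142611840)*x'*C*C' + ((222041:ℂ)/14261184)*x'*A*A' + ((-21644339:ℂ)/142611840)*x'*z'*A*A' + ((86137:ℂ)/11884320)*x'*z*C*C' + ((-514513:ℂ)/10186560)*x'*z*A*A' + ((1604467:ℂ)/71305920)*x'*y'*C*C' + ((-4942993:ℂ)/47537280)*x'*y'*A*A' + ((-41105:ℂ)/452736)*x'*y'*z'*A*A' + ((63841:ℂ)/31691520)*x'*y'*z*C*C' + ((-618143:ℂ)/31691520)*x'*y'*z*A*A'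 + ((444539:ℂ)/20373120)*x'*y*C*C' + ((25:ℂ)/2688)*x'*y*z'*A*A' + ((290273:ℂ)/7922880)*x'*y*z*C*C' + ((-13:ℂ)/896)*x'*y*z*A*A' + ((1039783:ℂ)/47537280)*x*A*A' + ((-273293:ℂ)/7130592)*x*z'*A*A' + ((3222217:ℂ)/5942160)*x*z*C*C' + ((-4650997:ℂ)/20373120)*x*z*A*A' + ((-239741:ℂ)/20373120)*x*y'*C*C' + ((1331557:ℂ)/47537280)*x*y'*A*A' + ((63841:ℂ)/4527360)*x*y'*z*C*C' + ((63841:ℂ)/31691520)*x*y'*z*A*A' + ((-1707427:ℂ)/71305920)*x*y*C*C' + ((5539:ℂ)/55020)*x*y*z*C*C') * hV3 +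
      (((-101:ℂ)/630)*E' + ((-3127:ℂ)/5040)*C' + ((277:ℂ)/1680)*z'*E' + ((641:ℂ)/5040)*z'*C' + ((247:ℂ)/2016)*z'^2*E' + ((-41:ℂ)/360)*z*E' + ((-1049:ℂ)/3360)*z*C' + ((-41:ℂ)/720)*z*z'*E' + ((641:ℂ)/10080)*z*z'*C' + ((-1:ℂ)/1008)*z^2*C' + ((275:ℂ)/1008)*y'*E' + ((275:ℂ)/1008)*y'*C' + ((363:ℂ)/1120)*y'*z'*E' + ((1391:ℂ)/10080)*y'*z'*C' + ((473:ℂ)/5040)*y'*z'^2*E' + ((47:ℂ)/1008)*y'*z*E' + ((95:ℂ)/336)*y'*z*C' + ((47:ℂ)/2016)*y'*z*z'*E' + ((1391:ℂ)/20160)*y'*z*z'*C' + ((295:ℂ)/4032)*y'*z^2*C' + ((-101:ℂ)/1260)*y*E' + ((47:ℂ)/168)*y*C' + ((1313:ℂ)/10080)*y*z'*E' + ((11:ℂ)/224)*y*z'*C' + ((13:ℂ)/3360)*y*z'^2*E' + ((-41:ℂ)/720)*y*z*E' + ((47:ℂ)/224)*y*z*C' + ((11:ℂ)/448)*y*z*z'*C'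 + ((47:ℂ)/1344)*y*z^2*C' + ((275:ℂ)/2016)*y*y'*E' + ((473:ℂ)/5040)*y*y'*z'*E' + ((47:ℂ)/2016)*y*y'*z*E' + ((13:ℂ)/3360)*y^2*z'*E' + ((275:ℂ)/1008)*x'*E' + ((-2357:ℂ)/10080)*x'*C' + ((1243:ℂ)/3360)*x'*z'*E' + ((1747:ℂ)/10080)*x'*z'*C' + ((1177:ℂ)/10080)*x'*z'^2*E' + ((11:ℂ)/144)*x'*z*E' + ((683:ℂ)/10080)*x'*z*C' + ((11:ℂ)/288)*x'*z*z'*E' + ((79:ℂ)/1440)*x'*z*z'*C' + ((11:ℂ)/720)*x'*z^2*C' + ((169:ℂ)/630)*x'*y'*E' + ((2621:ℂ)/10080)*x'*y'*C' + ((831:ℂ)/2240)*x'*y'*z'*E' + ((1343:ℂ)/10080)*x'*y'*z'*C' + ((955:ℂ)/8064)*x'*y'*z'^2*E' + ((271:ℂ)/4032)*x'*y'*z*E' + ((899:ℂ)/5040)*x'*y'*z*C' + ((271:ℂ)/8064)*x'*y'*z*z'*E' + ((37:ℂ)/1152)*x'*y'*z*z'*C' + ((25:ℂ)/1152)*x'*y'*z^2*C'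 + ((275:ℂ)/2016)*x'*y*E' + ((47:ℂ)/336)*x'*y*C' + ((2729:ℂ)/20160)*x'*y*z'*E' + ((13:ℂ)/672)*x'*y*z'*C' + ((25:ℂ)/2688)*x'*y*z'^2*E' + ((37:ℂ)/4032)*x'*y*z*E' + ((5:ℂ)/168)*x'*y*z*C' + ((-13:ℂ)/896)*x'*y*z*z'*E' + ((-1:ℂ)/384)*x'*y*z*z'*C' + ((-1:ℂ)/384)*x'*y*z^2*C' + ((169:ℂ)/1260)*x'*y*y'*E' + ((955:ℂ)/8064)*x'*y*y'*z'*E' + ((271:ℂ)/8064)*x'*y*y'*z*E' + ((25:ℂ)/2688)*x'*y^2*z'*E' + ((-13:ℂ)/896)*x'*y^2*z*E' + ((11:ℂ)/288)*x'^2*C' + ((79:ℂ)/1440)*x'^2*z'*C' + ((11:ℂ)/720)*x'^2*z*C' + ((89:ℂ)/1440)*x'^2*y'*C' + ((37:ℂ)/1152)*x'^2*y'*z'*C' + ((25:ℂ)/1152)*x'^2*y'*z*C' + ((-1:ℂ)/384)*x'^2*y*z'*C' + ((-1:ℂ)/384)*x'^2*y*z*C' + ((1:ℂ)/10)*x*z*C'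 + ((1:ℂ)/20)*x*z^2*C' + ((1:ℂ)/20)*x*x'*z*C') * hw1 +
      (((3127:ℂ)/5040)*A' + ((-641:ℂ)/5040)*z'*A' + ((1:ℂ)/504)*z*A' + ((377:ℂ)/10080)*y'*A' + ((-127:ℂ)/630)*y'*z'*A' + ((-293:ℂ)/2016)*y'*z*A' + ((-275:ℂ)/2016)*y'^2*A' + ((-1391:ℂ)/20160)*y'^2*z'*A' + ((-295:ℂ)/4032)*y'^2*z*A' + ((-47:ℂ)/168)*y*A' + ((-11:ℂ)/224)*y*z'*A' + ((-47:ℂ)/672)*y*z*A' + ((-47:ℂ)/336)*y*y'*A' + ((-11:ℂ)/448)*y*y'*z'*A' + ((-47:ℂ)/1344)*y*y'*z*A' + ((-11:ℂ)/144)*x'*A' + ((-79:ℂ)/720)*x'*z'*A' + ((-11:ℂ)/360)*x'*z*A' + ((-233:ℂ)/1440)*x'*y'*A' + ((-343:ℂ)/2880)*x'*y'*z'*A' + ((-169:ℂ)/2880)*x'*y'*z*A' + ((-89:ℂ)/1440)*x'*y'^2*A' + ((-37:ℂ)/1152)*x'*y'^2*z'*A' + ((-25:ℂ)/1152)*x'*y'^2*z*A'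 + ((1:ℂ)/192)*x'*y*z'*A' + ((1:ℂ)/192)*x'*y*z*A' + ((1:ℂ)/384)*x'*y*y'*z'*A' + ((1:ℂ)/384)*x'*y*y'*z*A' + ((3127:ℂ)/10080)*x*A' + ((-641:ℂ)/10080)*x*z'*A' + ((-499:ℂ)/5040)*x*z*A' + ((-275:ℂ)/2016)*x*y'*A' + ((-1391:ℂ)/20160)*x*y'*z'*A' + ((-2483:ℂ)/20160)*x*y'*z*A' + ((-47:ℂ)/336)*x*y*A' + ((-11:ℂ)/448)*x*y*z'*A' + ((-47:ℂ)/1344)*x*y*z*A' + ((-11:ℂ)/288)*x*x'*A' + ((-79:ℂ)/1440)*x*x'*z'*A' + ((-11:ℂ)/720)*x*x'*z*A' + ((-89:ℂ)/1440)*x*x'*y'*A' + ((-37:ℂ)/1152)*x*x'*y'*z'*A' + ((-25:ℂ)/1152)*x*x'*y'*z*A' + ((1:ℂ)/384)*x*x'*y*z'*A' + ((1:ℂ)/384)*x*x'*y*z*A' + ((-1:ℂ)/20)*x^2*z*A') * hw2 +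
      (((101:ℂ)/630)*A' + ((-247:ℂ)/1008)*z'*A' + ((41:ℂ)/360)*z*A' + ((-971:ℂ)/5040)*y'*A' + ((-3127:ℂ)/10080)*y'*z'*A' + ((13:ℂ)/1260)*y'*z*A' + ((-275:ℂ)/2016)*y'^2*A' + ((-473:ℂ)/5040)*y'^2*z'*A' + ((-47:ℂ)/2016)*y'^2*z*A' + ((-13:ℂ)/1680)*y*z'*A' + ((-13:ℂ)/3360)*y*y'*z'*A' + ((-275:ℂ)/1008)*x'*A' + ((-1177:ℂ)/5040)*x'*z'*A' + ((-11:ℂ)/144)*x'*z*A' + ((-4079:ℂ)/10080)*x'*y'*A' + ((-7129:ℂ)/20160)*x'*y'*z'*A' + ((-425:ℂ)/4032)*x'*y'*z*A' + ((-169:ℂ)/1260)*x'*y'^2*A' + ((-955:ℂ)/8064)*x'*y'^2*z'*A' + ((-271:ℂ)/8064)*x'*y'^2*z*A' + ((-25:ℂ)/1344)*x'*y*z'*A' + ((13:ℂ)/448)*x'*y*z*A' + ((-25:ℂ)/2688)*x'*y*y'*z'*A' + ((13:ℂ)/896)*x'*y*y'*z*A' + ((101:ℂ)/1260)*x*A'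 + ((-247:ℂ)/2016)*x*z'*A' + ((41:ℂ)/720)*x*z*A' + ((-275:ℂ)/2016)*x*y'*A' + ((-473:ℂ)/5040)*x*y'*z'*A' + ((-47:ℂ)/2016)*x*y'*z*A' + ((-13:ℂ)/3360)*x*y*z'*A' + ((-275:ℂ)/2016)*x*x'*A' + ((-1177:ℂ)/10080)*x*x'*z'*A' + ((-11:ℂ)/288)*x*x'*z*A' + ((-169:ℂ)/1260)*x*x'*y'*A' + ((-955:ℂ)/8064)*x*x'*y'*z'*A' + ((-271:ℂ)/8064)*x*x'*y'*z*A' + ((-25:ℂ)/2688)*x*x'*y*z'*A' + ((13:ℂ)/896)*x*x'*y*z*A') * hw3 +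
      (((-2903303:ℂ)/1697760) + ((-133671943:ℂ)/7922880)*z' + ((-1611529:ℂ)/3565296)*z'^2 + ((81908501:ℂ)/28522368)*z + ((248036339:ℂ)/23768640)*z*z' + ((92154121:ℂ)/17826480)*z*z'^2 + ((38365403:ℂ)/10186560)*z^2 + ((508708127:ℂ)/142611840)*z^2*z' + ((709225:ℂ)/4753728)*z^2*z'^2 + ((684349:ℂ)/11884320)*z^3 + ((-86137:ℂ)/5942160)*z^3*z' + ((172309801:ℂ)/15845760)*y' + ((-9382819:ℂ)/5942160)*y'*z' + ((98408389:ℂ)/142611840)*y'*z'^2 + ((69377797:ℂ)/17826480)*y'*z + ((387596689:ℂ)/142611840)*y'*z*z' + ((4182623:ℂ)/8913240)*y'*z*z'^2 + ((52222081:ℂ)/47537280)*y'*z^2 + ((36172361:ℂ)/35652960)*y'*z^2*z' + ((-21895:ℂ)/1584576)*y'*z^2*z'^2 + ((63841:ℂ)/7922880)*y'*z^3 + ((-63841:ℂ)/15845760)*y'*z^3*z' + ((-64429261:ℂ)/17826480)*y'^2 + ((-315594721:ℂ)/142611840)*y'^2*z' + ((27373:ℂ)/377280)*y'^2*z'^2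 + ((-1781609:ℂ)/6791040)*y'^2*z + ((2378977:ℂ)/71305920)*y'^2*z*z' + ((-63841:ℂ)/2263680)*y'^2*z*z'^2 + ((63841:ℂ)/3961440)*y'^2*z^2 + ((-63841:ℂ)/15845760)*y'^2*z^2*z' + ((-579121:ℂ)/5942160)*y'^3 + ((-1331557:ℂ)/23768640)*y'^3*z' + ((63841:ℂ)/7922880)*y'^3*z + ((-63841:ℂ)/15845760)*y'^3*z*z' + ((22992833:ℂ)/2228310)*y + ((-37183999:ℂ)/10186560)*y*z' + ((-157043:ℂ)/495180)*y*z'^2 + ((96644183:ℂ)/23768640)*y*z + ((35029913:ℂ)/142611840)*y*z*z' + ((11761243:ℂ)/35652960)*y*z*z'^2 + ((535127263:ℂ)/142611840)*y*z^2 + ((12468887:ℂ)/71305920)*y*z^2*z' + ((15:ℂ)/112)*y*z^2*z'^2 + ((526271:ℂ)/23768640)*y*z^3 + ((-290273:ℂ)/3961440)*y*z^3*z' + ((-77527189:ℂ)/11884320)*y*y' + ((-72962249:ℂ)/28522368)*y*y'*z' + ((-769417:ℂ)/71305920)*y*y'*z'^2 + ((-474984149:ℂ)/142611840)*y*y'*z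 + ((-3231887:ℂ)/2971080)*y*y'*z*z' + ((175537:ℂ)/1980720)*y*y'*z*z'^2 + ((7897009:ℂ)/71305920)*y*y'*z^2 + ((307673:ℂ)/15845760)*y*y'*z^2*z' + ((-63841:ℂ)/15845760)*y*y'*z^3 + ((-961073609:ℂ)/142611840)*y*y'^2 + ((-12388805:ℂ)/14261184)*y*y'^2*z' + ((-3346907:ℂ)/4456620)*y*y'^2*z + ((-354661:ℂ)/2263680)*y*y'^2*z*z' + ((-1439341:ℂ)/15845760)*y*y'^2*z^2 + ((-1331557:ℂ)/23768640)*y*y'^3 + ((-63841:ℂ)/15845760)*y*y'^3*z + ((-2935259:ℂ)/17826480)*y^2 + ((-561913:ℂ)/3961440)*y^2*z' + ((-29924539:ℂ)/20373120)*y^2*z + ((23836991:ℂ)/71305920)*y^2*z*z' + ((1:ℂ)/96)*y^2*z*z'^2 + ((-45847:ℂ)/264096)*y^2*z^2 + ((1:ℂ)/96)*y^2*z^2*z' + ((-290273:ℂ)/3961440)*y^2*z^3 + ((-228224113:ℂ)/71305920)*y^2*y' + ((329969:ℂ)/71305920)*y^2*y'*z' + ((-10452581:ℂ)/10186560)*y^2*y'*z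 + ((450637:ℂ)/1980720)*y^2*y'*z*z' + ((10907:ℂ)/251520)*y^2*y'*z^2 + ((-7856617:ℂ)/23768640)*y^2*y'^2 + ((-5539:ℂ)/110040)*y^2*y'^2*z + ((-33007207:ℂ)/7922880)*x' + ((-87201893:ℂ)/17826480)*x'*z' + ((-2131109:ℂ)/7130592)*x'*z'^2 + ((19611707:ℂ)/35652960)*x'*z + ((9068767:ℂ)/3961440)*x'*z*z' + ((97215731:ℂ)/71305920)*x'*z*z'^2 + ((14703209:ℂ)/35652960)*x'*z^2 + ((33863633:ℂ)/71305920)*x'*z^2*z' + ((-75851179:ℂ)/17826480)*x'*y' + ((-431875:ℂ)/88032)*x'*y'*z' + ((-7962523:ℂ)/17826480)*x'*y'*z'^2 + ((-6656801:ℂ)/47537280)*x'*y'*z + ((132922271:ℂ)/71305920)*x'*y'*z*z' + ((1129045:ℂ)/1584576)*x'*y'*z*z'^2 + ((291169:ℂ)/1320480)*x'*y'*z^2 + ((2408731:ℂ)/15845760)*x'*y'*z^2*z' + ((-221811803:ℂ)/142611840)*x'*y'^2 + ((-37848499:ℂ)/35652960)*x'*y'^2*z' + ((-21895:ℂ)/528192)*x'*y'^2*z'^2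 + ((-1155641:ℂ)/2971080)*x'*y'^2*z + ((-63841:ℂ)/2263680)*x'*y'^2*z*z' + ((258917:ℂ)/11884320)*x'*y'^3 + ((21895:ℂ)/1584576)*x'*y'^3*z' + ((-10742947:ℂ)/17826480)*x'*y + ((-567893:ℂ)/1320480)*x'*y*z' + ((-3:ℂ)/56)*x'*y*z'^2 + ((2645507:ℂ)/1320480)*x'*y*z + ((73145321:ℂ)/71305920)*x'*y*z*z' + ((5:ℂ)/84)*x'*y*z*z'^2 + ((725483:ℂ)/2546640)*x'*y*z^2 + ((169537:ℂ)/3961440)*x'*y*z^2*z' + ((-2515121:ℂ)/1131840)*x'*y*y' + ((-103112099:ℂ)/71305920)*x'*y*y'*z' + ((-115:ℂ)/672)*x'*y*y'*z'^2 + ((56261563:ℂ)/71305920)*x'*y*y'*z + ((188753:ℂ)/396144)*x'*y*y'*z*z' + ((404833:ℂ)/3961440)*x'*y*y'*z^2 + ((-8232617:ℂ)/10186560)*x'*y*y'^2 + ((-15:ℂ)/112)*x'*y*y'^2*z' + ((6757:ℂ)/990360)*x'*y*y'^2*z + ((-4598161:ℂ)/17826480)*x'*y^2 + ((-1869263:ℂ)/17826480)*x'*y^2*z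 + ((-290273:ℂ)/3961440)*x'*y^2*z^2 + ((-18531641:ℂ)/71305920)*x'*y^2*y' + ((-290273:ℂ)/990360)*x'*y^2*y'*z + ((676061:ℂ)/7922880)*x'^2*z*z' + ((676061:ℂ)/3961440)*x'^2*y' + ((-676061:ℂ)/7922880)*x'^2*y'*z' + ((-676061:ℂ)/3961440)*x'^2*y + ((676061:ℂ)/7922880)*x'^2*y*z + ((-676061:ℂ)/7922880)*x'^2*y*y' + ((25221691:ℂ)/7922880)*x + ((-3204059:ℂ)/2640960)*x*z' + ((273293:ℂ)/1782648)*x*z'^2 + ((12217133:ℂ)/990360)*x*z + ((149468573:ℂ)/35652960)*x*z*z' + ((273293:ℂ)/891324)*x*z*z'^2 + ((18016079:ℂ)/4074624)*x*z^2 + ((173661451:ℂ)/71305920)*x*z^2*z' + ((2750837:ℂ)/11884320)*x*z^3 + ((-2940677:ℂ)/1584576)*x*y' + ((-668243:ℂ)/660240)*x*y'*z' + ((273293:ℂ)/3565296)*x*y'*z'^2 + ((-102714749:ℂ)/47537280)*x*y'*z + ((-30664741:ℂ)/35652960)*x*y'*z*z' + ((-33697:ℂ)/5942160)*x*y'*z^2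 + ((-237157:ℂ)/7922880)*x*y'*z^2*z' + ((-1796539:ℂ)/35652960)*x*y'^2 + ((-579121:ℂ)/17826480)*x*y'^2*z' + ((-63841:ℂ)/1320480)*x*y'^2*z + ((-63841:ℂ)/1980720)*x*y'^2*z*z' + ((162019:ℂ)/113184)*x*y + ((-35429:ℂ)/123795)*x*y*z' + ((20276089:ℂ)/7922880)*x*y*z + ((25694059:ℂ)/71305920)*x*y*z*z' + ((10477903:ℂ)/17826480)*x*y*z^2 + ((15:ℂ)/112)*x*y*z^2*z' + ((-90869:ℂ)/3961440)*x*y*z^3 + ((-61796873:ℂ)/35652960)*x*y*y' + ((-32461033:ℂ)/71305920)*x*y*y'*z' + ((-369473329:ℂ)/71305920)*x*y*y'*z + ((-435517:ℂ)/1320480)*x*y*y'*z*z' + ((-260341:ℂ)/2263680)*x*y*y'*z^2 + ((2718077:ℂ)/71305920)*x*y*y'^2 + ((-1851389:ℂ)/15845760)*x*y*y'^2*z + ((1707427:ℂ)/17826480)*x*y^2 + ((-390701:ℂ)/3565296)*x*y^2*z + ((1:ℂ)/96)*x*y^2*z*z' + ((-61883:ℂ)/440160)*x*y^2*z^2 +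 ((-1982087:ℂ)/14261184)*x*y^2*y' + ((-94163:ℂ)/110040)*x*y^2*y'*z + ((-11:ℂ)/36)*x*x' + ((-79:ℂ)/180)*x*x'*z' + ((15039823:ℂ)/7922880)*x*x'*z + ((2895569:ℂ)/4753728)*x*x'*z*z' + ((2750837:ℂ)/11884320)*x*x'*z^2 + ((-1026955:ℂ)/528192)*x*x'*y' + ((-4117013:ℂ)/4753728)*x*x'*y'*z' + ((-1268251:ℂ)/2971080)*x*x'*y'*z + ((-21895:ℂ)/1584576)*x*x'*y'*z*z' + ((258917:ℂ)/11884320)*x*x'*y'^2 + ((21895:ℂ)/1584576)*x*x'*y'^2*z' + ((-676061:ℂ)/3961440)*x*x'*y + ((1:ℂ)/48)*x*x'*y*z' + ((15426041:ℂ)/23768640)*x*x'*y*z + ((15:ℂ)/112)*x*x'*y*z*z' + ((-90869:ℂ)/3961440)*x*x'*y*z^2 + ((-14930861:ℂ)/23768640)*x*x'*y*y' + ((-15:ℂ)/112)*x*x'*y*y'*z' + ((90869:ℂ)/3961440)*x*x'*y*y'*z) * hx +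
      (((257294497:ℂ)/7922880) + ((305309173:ℂ)/11884320)*z' + ((7005977:ℂ)/7130592)*z'^2 + ((55657369:ℂ)/2546640)*z + ((-9078241:ℂ)/848880)*z*z' + ((-1723781:ℂ)/318330)*z*z'^2 + ((29090807:ℂ)/35652960)*z^2 + ((-241397123:ℂ)/142611840)*z^2*z' + ((-871:ℂ)/20160)*z^2*z'^2 + ((662393:ℂ)/9507456)*z^3 + ((245301061:ℂ)/35652960)*y' + ((13281409:ℂ)/2640960)*y'*z' + ((1735:ℂ)/42444)*y'*z'^2 + ((29150287:ℂ)/14261184)*y'*z + ((-218309563:ℂ)/142611840)*y'*z*z' + ((-41159273:ℂ)/23768640)*y'*z*z'^2 + ((-8031181:ℂ)/11884320)*y'*z^2 + ((-3213485:ℂ)/4753728)*y'*z^2*z' + ((63841:ℂ)/7922880)*y'*z^3 + ((1400393:ℂ)/3395520)*y'^2 + ((-21895:ℂ)/396144)*y'^2*z' + ((700253:ℂ)/11884320)*y'^2*z + ((441425:ℂ)/1584576)*y'^2*z*z' + ((63841:ℂ)/7922880)*y'^2*z^2 + ((62895809:ℂ)/71305920)*y + ((787757:ℂ)/176064)*y*z'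 + ((133697:ℂ)/3961440)*y*z'^2 + ((4226831:ℂ)/1018656)*y*z + ((12522283:ℂ)/4456620)*y*z*z' + ((-255373:ℂ)/1980720)*y*z*z'^2 + ((2664959:ℂ)/3169152)*y*z^2 + ((14097487:ℂ)/23768640)*y*z^2*z' + ((290273:ℂ)/7922880)*y*z^3 + ((29215691:ℂ)/23768640)*y*y' + ((188047:ℂ)/282960)*y*y'*z' + ((9217249:ℂ)/23768640)*y*y'*z + ((-5483:ℂ)/176064)*y*y'*z*z' + ((290273:ℂ)/7922880)*y*y'*z^2 + ((533145097:ℂ)/142611840)*x' + ((218558167:ℂ)/35652960)*x'*z' + ((-158302439:ℂ)/142611840)*x'*z'^2 + ((4022483:ℂ)/1018656)*x'*z + ((-219739589:ℂ)/47537280)*x'*z*z' + ((-2715289:ℂ)/1320480)*x'*z*z'^2 + ((-6627937:ℂ)/35652960)*x'*z^2 + ((1184167:ℂ)/7922880)*x'*z^2*z' + ((-15:ℂ)/112)*x'*z^2*z'^2 + ((290273:ℂ)/3961440)*x'*z^3*z' + ((212419:ℂ)/198072)*x'*y' + ((125430013:ℂ)/71305920)*x'*y'*z' + ((2296303:ℂ)/23768640)*x'*y'*z'^2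 + ((55724419:ℂ)/71305920)*x'*y'*z + ((-12039191:ℂ)/23768640)*x'*y'*z*z' + ((-197:ℂ)/504)*x'*y'*z*z'^2 + ((-260341:ℂ)/1131840)*x'*y'*z^2 + ((-397477:ℂ)/3961440)*x'*y'*z^2*z' + ((-1793593:ℂ)/6791040)*x'*y'^2 + ((-616585:ℂ)/1584576)*x'*y'^2*z' + ((-63841:ℂ)/990360)*x'*y'^2*z + ((-8803121:ℂ)/11884320)*x'*y + ((144794351:ℂ)/142611840)*x'*y*z' + ((133697:ℂ)/7922880)*x'*y*z'^2 + ((122908997:ℂ)/142611840)*x'*y*z + ((-1412909:ℂ)/3395520)*x'*y*z*z' + ((1:ℂ)/48)*x'*y*z*z'^2 + ((1760741:ℂ)/7922880)*x'*y*z^2 + ((1:ℂ)/48)*x'*y*z^2*z' + ((14742187:ℂ)/23768640)*x'*y*y' + ((1257547:ℂ)/1584576)*x'*y*y'*z' + ((2988581:ℂ)/7922880)*x'*y*y'*z + ((259651:ℂ)/159165)*x'^2 + ((2216495:ℂ)/7130592)*x'^2*z' + ((-848843:ℂ)/1782648)*x'^2*z'^2 + ((59857793:ℂ)/142611840)*x'^2*z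 + ((-4370663:ℂ)/11884320)*x'^2*z*z' + ((-69157:ℂ)/282960)*x'^2*z*z'^2 + ((260089:ℂ)/1980720)*x'^2*z^2*z' + ((-4636771:ℂ)/71305920)*x'^2*y' + ((-45304547:ℂ)/71305920)*x'^2*y'*z' + ((-55:ℂ)/96)*x'^2*y'*z'^2 + ((2490151:ℂ)/7922880)*x'^2*y'*z + ((5500147:ℂ)/15845760)*x'^2*y'*z*z' + ((-444539:ℂ)/5093280)*x'^2*y + ((-4598161:ℂ)/35652960)*x'^2*y*z' + ((-290273:ℂ)/1980720)*x'^2*y*z + ((-290273:ℂ)/3961440)*x'^2*y*z*z' + ((-676061:ℂ)/7922880)*x'^2*y*y' + ((-676061:ℂ)/7922880)*x'^3*z' + ((-676061:ℂ)/7922880)*x'^3*y' + ((-8644463:ℂ)/3565296)*x + ((92738663:ℂ)/35652960)*x*z' + ((273293:ℂ)/1782648)*x*z'^2 + ((8026651:ℂ)/1782648)*x*z + ((6157819:ℂ)/6791040)*x*z*z' + ((-5047247:ℂ)/23768640)*x*z*z'^2 + ((-955511:ℂ)/2376864)*x*z^2 + ((14060639:ℂ)/11884320)*x*z^2*z' +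 ((2923111:ℂ)/11884320)*x*z^3 + ((-100747477:ℂ)/35652960)*x*y' + ((-499361:ℂ)/35652960)*x*y'*z' + ((55810603:ℂ)/142611840)*x*y'*z + ((1349501:ℂ)/7922880)*x*y'*z*z' + ((-154571:ℂ)/1697760)*x*y'*z^2 + ((63841:ℂ)/15845760)*x*y'*z^3 + ((-1331557:ℂ)/11884320)*x*y'^2 + ((81431:ℂ)/1697760)*x*y'^2*z + ((63841:ℂ)/15845760)*x*y'^2*z^2 + ((-3226849:ℂ)/5093280)*x*y + ((155797:ℂ)/1273320)*x*y*z' + ((24136891:ℂ)/8913240)*x*y*z + ((58253:ℂ)/247590)*x*y*z*z' + ((7864321:ℂ)/11884320)*x*y*z^2 + ((5539:ℂ)/110040)*x*y*z^3 + ((-1331557:ℂ)/11884320)*x*y*y' + ((3832547:ℂ)/11884320)*x*y*y'*z + ((5539:ℂ)/110040)*x*y*y'*z^2 + ((31879:ℂ)/2037312)*x^2 + ((273293:ℂ)/1782648)*x^2*z' + ((-163963967:ℂ)/142611840)*x^2*z + ((-1856453:ℂ)/11884320)*x^2*z*z' + ((-22999153:ℂ)/17826480)*x^2*z^2 + ((-63841:ℂ)/15845760)*x^2*z^2*z'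 + ((-63841:ℂ)/5281920)*x^2*z^3 + ((-579121:ℂ)/8913240)*x^2*y' + ((76879:ℂ)/5093280)*x^2*y'*z + ((-63841:ℂ)/2640960)*x^2*y'*z^2 + ((1707427:ℂ)/17826480)*x^2*y + ((-2862071:ℂ)/35652960)*x^2*y*z + ((-2456689:ℂ)/15845760)*x^2*y*z^2) * hy +
      (((-808951727:ℂ)/23768640) + ((-47232581:ℂ)/23768640)*z' + ((-12475109:ℂ)/754560)*z + ((-3976907:ℂ)/2971080)*z*z' + ((-1733951:ℂ)/1188432)*z^2 + ((-137774855:ℂ)/4074624)*y' + ((-22198361:ℂ)/7922880)*y'*z' + ((-10676591:ℂ)/7922880)*y'*z + ((964831:ℂ)/3395520)*y'*z*z' + ((167753:ℂ)/424440)*y'*z^2 + ((-14923189:ℂ)/5093280)*y'^2 + ((-3452723:ℂ)/15845760)*y'^2*z' + ((65962:ℂ)/371385)*y'^2*z + ((63841:ℂ)/7922880)*y'^2*z^2 + ((-4058399:ℂ)/47537280)*y'^3 + ((63841:ℂ)/7922880)*y'^3*z + ((-18546701:ℂ)/679104)*y + ((-35514391:ℂ)/8913240)*y*z' + ((-612327593:ℂ)/71305920)*y*z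 + ((-714079:ℂ)/1980720)*y*z*z' + ((-321283:ℂ)/565920)*y*z^2 + ((-1487423:ℂ)/1273320)*y^2 + ((-301589:ℂ)/1980720)*y^2*z' + ((-4445501:ℂ)/11884320)*y^2*z + ((82518955:ℂ)/28522368)*x' + ((4200379:ℂ)/3395520)*x'*z' + ((391183:ℂ)/247590)*x'*z + ((-968099:ℂ)/5942160)*x'*z*z' + ((526271:ℂ)/11884320)*x'*z^2 + ((-29731951:ℂ)/14261184)*x'*y' + ((-11657281:ℂ)/10186560)*x'*y'*z' + ((22597739:ℂ)/28522368)*x'*y'*z + ((-233603:ℂ)/1485540)*x'*y'*z*z' + ((30605:ℂ)/4753728)*x'*y'*z^2 + ((119535067:ℂ)/71305920)*x'*y'^2 + ((-9286303:ℂ)/23768640)*x'*y'^2*z' + ((-95867:ℂ)/11884320)*x'*y'^2*z + ((21895:ℂ)/1584576)*x'*y'^2*z*z' + ((63841:ℂ)/15845760)*x'*y'^2*z^2 + ((1849391:ℂ)/23768640)*x'*y'^3 + ((21895:ℂ)/1584576)*x'*y'^3*z' + ((63841:ℂ)/15845760)*x'*y'^3*z + ((-578246237:ℂ)/71305920)*x'*y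 + ((-8722583:ℂ)/8913240)*x'*y*z' + ((-6101719:ℂ)/2546640)*x'*y*z + ((-290273:ℂ)/1980720)*x'*y*z*z' + ((-290273:ℂ)/1980720)*x'*y*z^2 + ((-16583729:ℂ)/35652960)*x'*y^2 + ((1:ℂ)/48)*x'*y^2*z' + ((-15563:ℂ)/123795)*x'*y^2*z + ((-26984953:ℂ)/71305920)*x'^2 + ((-3721639:ℂ)/35652960)*x'^2*z' + ((33776:ℂ)/222831)*x'^2*z + ((-34875629:ℂ)/71305920)*x'^2*y' + ((-3640519:ℂ)/17826480)*x'^2*y'*z' + ((-903353:ℂ)/35652960)*x'^2*y'*z + ((-1092089:ℂ)/35652960)*x'^2*y'^2 + ((-720691:ℂ)/15845760)*x'^2*y'^2*z' + ((-63841:ℂ)/2640960)*x'^2*y'^2*z + ((-63841:ℂ)/5281920)*x'^2*y'^3 + ((-16583729:ℂ)/35652960)*x'^2*y + ((-25:ℂ)/336)*x'^2*y*z' + ((-539:ℂ)/17685)*x'^2*y*z + ((-184789:ℂ)/136080)*x + ((64653913:ℂ)/35652960)*x*z' + ((-237010381:ℂ)/10186560)*x*z + ((-3784559:ℂ)/1485540)*x*z*z'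 + ((-125921263:ℂ)/47537280)*x*z^2 + ((-142274953:ℂ)/71305920)*x*y' + ((101880629:ℂ)/142611840)*x*y'*z' + ((-297587:ℂ)/159165)*x*y'*z + ((-63841:ℂ)/1131840)*x*y'*z*z' + ((-63841:ℂ)/990360)*x*y'*z^2 + ((-909397:ℂ)/5093280)*x*y'^2 + ((-63841:ℂ)/1131840)*x*y'^2*z + ((-28752215:ℂ)/14261184)*x*y + ((1518689:ℂ)/20373120)*x*y*z' + ((-22065043:ℂ)/5093280)*x*y*z + ((-949387:ℂ)/2640960)*x*y*z*z' + ((-5539:ℂ)/13755)*x*y*z^2 + ((49857971:ℂ)/47537280)*x*y^2 + ((-644443:ℂ)/7922880)*x*y^2*z' + ((-10485179:ℂ)/23768640)*x*y^2*z + ((10483969:ℂ)/17826480)*x^2 + ((273293:ℂ)/1782648)*x^2*z' + ((-102483677:ℂ)/142611840)*x^2*z + ((-13287919:ℂ)/142611840)*x^2*y' + ((-63841:ℂ)/990360)*x^2*y'*z + ((798605:ℂ)/2037312)*x^2*y + ((273293:ℂ)/3565296)*x^2*y*z' + ((13810417:ℂ)/7130592)*x^2*y*z + ((-334127:ℂ)/71305920)*x^2*y^2)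 * hz

/-- A complex Hadamard matrix of order `n`: all entries of absolute value 1
and pairwise orthogonal rows, i.e. `H Hᴴ = n·1`. -/
def IsHadamard {n : ℕ} (H : Matrix (Fin n) (Fin n) ℂ) : Prop :=
  (∀ i j, ‖H i j‖ = 1) ∧ H * Hᴴ = (n : ℂ) • 1

/-- If a 6×6 complex Hadamard matrix has first row and column of
1's and its upper-left 4×4 block is `[[1,1,1,1],[1,1,x,ȳ],[1,x̄,1,z],[1,y,z̄,1]]`,
then two of `x, y, z` are equal. -/
theorem two_of_xyz_equal (H : Matrix (Fin 6) (Fin 6) ℂ) (x y z : ℂ)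
    (hH : _root_.IsHadamard H)
    (hrow : ∀ j, H 0 j = 1) (hcol : ∀ i, H i 0 = 1)
    (h11 : H 1 1 = 1) (h12 : H 1 2 = x) (h13 : H 1 3 = conj y)
    (h21 : H 2 1 = conj x) (h22 : H 2 2 = 1) (h23 : H 2 3 = z)
    (h31 : H 3 1 = y) (h32 : H 3 2 = conj z) (h33 : H 3 3 = 1) :
    x = y ∨ y = z ∨ x = z := by
  obtain ⟨habs, horth⟩ := hH
  have orth : ∀ i j : Fin 6, i ≠ j → (∑ k : Fin 6, H i k * conj (H j k)) = 0 := by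
    intro i j hij
    have h := congrFun (congrFun horth i) j
    rw [Matrix.mul_apply] at h
    simp only [Matrix.conjTranspose_apply, Matrix.smul_apply, Matrix.one_apply, if_neg hij,
      smul_zero, Complex.star_def] at h
    exact h
  have hx : x * conj x = 1 := by
    have := uni_of_abs_one _ (habs 1 2); rwa [h12] at this
  have hy : y * conj y = 1 := by
    have := uni_of_abs_one _ (habs 3 1); rwa [h31] at this
  have hz : z * conj z = 1 := by
    have := uni_of_abs_one _ (habs 2 3); rwa [h23] at this
  have ha : H 1 4 * conj (H 1 4) = 1 := uni_of_abs_one _ (habs 1 4)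
  have hb : H 1 5 * conj (H 1 5) = 1 := uni_of_abs_one _ (habs 1 5)
  have hc : H 2 4 * conj (H 2 4) = 1 := uni_of_abs_one _ (habs 2 4)
  have hd : H 2 5 * conj (H 2 5) = 1 := uni_of_abs_one _ (habs 2 5)
  have he : H 3 4 * conj (H 3 4) = 1 := uni_of_abs_one _ (habs 3 4)
  have hf : H 3 5 * conj (H 3 5) = 1 := uni_of_abs_one _ (habs 3 5)
  have he1 : 1 + 1 + x + conj y + H 1 4 + H 1 5 = 0 := by
    have h := orth 1 0 (by decide)
    rw [Fin.sum_univ_six] at h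
    simp only [hrow, _root_.map_one, mul_one] at h
    rw [hcol 1, h11, h12, h13] at h
    linear_combination h
  have he2 : 1 + conj x + 1 + z + H 2 4 + H 2 5 = 0 := by
    have h := orth 2 0 (by decide)
    rw [Fin.sum_univ_six] at h
    simp only [hrow, _root_.map_one, mul_one] at h
    rw [hcol 2, h21, h22, h23] at h
    linear_combination h
  have he3 : 1 + y + conj z + 1 + H 3 4 + H 3 5 = 0 := by
    have h := orth 3 0 (by decide)
    rw [Fin.sum_univ_six] at h
    simp only [hrow, _root_.map_one, mul_one] at h
    rw [hcol 3, h31, h32, h33] at h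
    linear_combination h
  have he12 : 1 + 2*x + conj y * conj z + H 1 4 * conj (H 2 4) + H 1 5 * conj (H 2 5) = 0 := by
    have h := orth 1 2 (by decide)
    rw [Fin.sum_univ_six, hcol 1, hcol 2, h11, h12, h13, h21, h22, h23] at h
    simp only [_root_.map_one, mul_one, one_mul, Complex.conj_conj] at h
    linear_combination h
  have he13 : 1 + 2*conj y + x*z + H 1 4 * conj (H 3 4) + H 1 5 * conj (H 3 5) = 0 := by
    have h := orth 1 3 (by decide)
    rw [Fin.sum_univ_six, hcol 1, hcol 3, h11, h12, h13, h31, h32, h33] at h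
    simp only [_root_.map_one, mul_one, one_mul, Complex.conj_conj] at h
    linear_combination h
  have he23 : 1 + conj x * conj y + 2*z + H 2 4 * conj (H 3 4) + H 2 5 * conj (H 3 5) = 0 := by
    have h := orth 2 3 (by decide)
    rw [Fin.sum_univ_six, hcol 2, hcol 3, h21, h22, h23, h31, h32, h33] at h
    simp only [_root_.map_one, mul_one, one_mul, Complex.conj_conj] at h
    linear_combination h
  have he1' : 1 + 1 + conj x + y + conj (H 1 4) + conj (H 1 5) = 0 := by
    have h := congrArg (starRingEnd ℂ) he1
    simp only [_root_.map_add, _root_.map_one, _root_.map_zero, Complex.conj_conj] at h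
    linear_combination h
  have he2' : 1 + x + 1 + conj z + conj (H 2 4) + conj (H 2 5) = 0 := by
    have h := congrArg (starRingEnd ℂ) he2
    simp only [_root_.map_add, _root_.map_one, _root_.map_zero, Complex.conj_conj] at h
    linear_combination h
  have he3' : 1 + conj y + z + 1 + conj (H 3 4) + conj (H 3 5) = 0 := by
    have h := congrArg (starRingEnd ℂ) he3
    simp only [_root_.map_add, _root_.map_one, _root_.map_zero, Complex.conj_conj] at h
    linear_combination h
  have he12' : 1 + 2*conj x + y * z + conj (H 1 4) * H 2 4 + conj (H 1 5) * H 2 5 = 0 := by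
    have h := congrArg (starRingEnd ℂ) he12
    simp only [_root_.map_add, _root_.map_mul, _root_.map_one, _root_.map_zero, _root_.map_ofNat, Complex.conj_conj] at h
    linear_combination h
  have he13' : 1 + 2*y + conj x * conj z + conj (H 1 4) * H 3 4 + conj (H 1 5) * H 3 5 = 0 := by
    have h := congrArg (starRingEnd ℂ) he13
    simp only [_root_.map_add, _root_.map_mul, _root_.map_one, _root_.map_zero, _root_.map_ofNat, Complex.conj_conj] at h
    linear_combination h
  have he23' : 1 + x * y + 2*conj z + conj (H 2 4) * H 3 4 + conj (H 2 5) * H 3 5 = 0 := by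
    have h := congrArg (starRingEnd ℂ) he23
    simp only [_root_.map_add, _root_.map_mul, _root_.map_one, _root_.map_zero, _root_.map_ofNat, Complex.conj_conj] at h
    linear_combination h
  have k12 : (H 1 4 - H 1 5) * (conj (H 2 4) - conj (H 2 5)) =
      -(2*(1 + 2*x + conj y * conj z) + (2 + x + conj y)*(2 + x + conj z)) := by
    linear_combination 2*he12 - (conj (H 2 4) + conj (H 2 5))*he1 + (2 + x + conj y)*he2'
  have k21 : (H 2 4 - H 2 5) * (conj (H 1 4) - conj (H 1 5)) =
      -(2*(1 + 2*conj x + y*z) + (2 + conj x + z)*(2 + conj x + y)) := by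
    linear_combination 2*he12' - (H 2 4 + H 2 5)*he1' + (2 + conj x + y)*he2
  have k13 : (H 1 4 - H 1 5) * (conj (H 3 4) - conj (H 3 5)) =
      -(2*(1 + 2*conj y + x*z) + (2 + x + conj y)*(2 + conj y + z)) := by
    linear_combination 2*he13 - (conj (H 3 4) + conj (H 3 5))*he1 + (2 + x + conj y)*he3'
  have k31 : (H 3 4 - H 3 5) * (conj (H 1 4) - conj (H 1 5)) =
      -(2*(1 + 2*y + conj x * conj z) + (2 + y + conj z)*(2 + conj x + y)) := by
    linear_combination 2*he13' - (H 3 4 + H 3 5)*he1' + (2 + conj x + y)*he3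
  have k23 : (H 2 4 - H 2 5) * (conj (H 3 4) - conj (H 3 5)) =
      -(2*(1 + conj x * conj y + 2*z) + (2 + conj x + z)*(2 + conj y + z)) := by
    linear_combination 2*he23 - (conj (H 3 4) + conj (H 3 5))*he2 + (2 + conj x + z)*he3'
  have k32 : (H 3 4 - H 3 5) * (conj (H 2 4) - conj (H 2 5)) =
      -(2*(1 + x*y + 2*conj z) + (2 + y + conj z)*(2 + x + conj z)) := by
    linear_combination 2*he23' - (H 3 4 + H 3 5)*he2' + (2 + x + conj z)*he3
  have kV1 : (H 1 4 - H 1 5) * (conj (H 1 4) - conj (H 1 5)) =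
      4 - (2 + x + conj y)*(2 + conj x + y) := by
    linear_combination 2*ha + 2*hb - (conj (H 1 4) + conj (H 1 5))*he1 + (2 + x + conj y)*he1'
  have kV2 : (H 2 4 - H 2 5) * (conj (H 2 4) - conj (H 2 5)) =
      4 - (2 + conj x + z)*(2 + x + conj z) := by
    linear_combination 2*hc + 2*hd - (conj (H 2 4) + conj (H 2 5))*he2 + (2 + conj x + z)*he2'
  have kV3 : (H 3 4 - H 3 5) * (conj (H 3 4) - conj (H 3 5)) =
      4 - (2 + y + conj z)*(2 + conj y + z) := by
    linear_combination 2*he + 2*hf - (conj (H 3 4) + conj (H 3 5))*he3 + (2 + y + conj z)*he3'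
  have kw1 : (2 + x + conj y)*(conj (H 1 4) - conj (H 1 5)) + (2 + conj x + y)*(H 1 4 - H 1 5) = 0 := by
    linear_combination (conj (H 1 4) - conj (H 1 5))*he1 + (H 1 4 - H 1 5)*he1' - 2*ha + 2*hb
  have kw2 : (2 + conj x + z)*(conj (H 2 4) - conj (H 2 5)) + (2 + x + conj z)*(H 2 4 - H 2 5) = 0 := by
    linear_combination (conj (H 2 4) - conj (H 2 5))*he2 + (H 2 4 - H 2 5)*he2' - 2*hc + 2*hd
  have kw3 : (2 + y + conj z)*(conj (H 3 4) - conj (H 3 5)) + (2 + conj y + z)*(H 3 4 - H 3 5) = 0 := by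
    linear_combination (conj (H 3 4) - conj (H 3 5))*he3 + (H 3 4 - H 3 5)*he3' - 2*he + 2*hf
  have key := keylemma x (conj x) y (conj y) z (conj z)
    (H 1 4 - H 1 5) (conj (H 1 4) - conj (H 1 5))
    (H 2 4 - H 2 5) (conj (H 2 4) - conj (H 2 5))
    (H 3 4 - H 3 5) (conj (H 3 4) - conj (H 3 5))
    hx hy hz k12 k21 k13 k31 k23 k32 kV1 kV2 kV3 kw1 kw2 kw3
  rcases mul_eq_zero.mp key with h | h
  · rcases mul_eq_zero.mp h with h' | h'
    · exact Or.inl (sub_eq_zero.mp h')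
    · exact Or.inr (Or.inl (sub_eq_zero.mp h'))
  · exact Or.inr (Or.inr (sub_eq_zero.mp h))
end

section
/- There is no self-adjoint dephased complex Hadamard matrix H ∈ M₆(ℂ) whose diagonal is (1, 1, 1, 1, 1, 1). -/
open Complex Matrix ComplexConjugate

/-- A matrix is dephased if its first row and first column consist of 1's. -/
def IsDephased {n : ℕ} [NeZero n] (H : Matrix (Fin n) (Fin n) ℂ) : Prop :=
  ∀ k, H 0 k = 1 ∧ H k 0 = 1

/-!
A self-adjoint Hadamard matrix `H` of order `n` satisfies `H² = n·1`, so its eigenvalues are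
`±√n` and its trace is `k√n` for some integer `k`. A unit diagonal makes the trace `n`, whence
`k² = n`: the order must be a perfect square, and `6` is not.
-/

namespace Matrix.IsHermitian

variable {𝕜 n : Type*} [RCLike 𝕜] [Fintype n] [DecidableEq n] {A : Matrix n n 𝕜}

theorem eigenvalues_sq_of_mul_self_eq (hA : A.IsHermitian) {c : ℝ}
    (h : A * A = (c : 𝕜) • 1) (i : n) : hA.eigenvalues i ^ 2 = c := by
  set v := (hA.eigenvectorBasis i).ofLp
  have hv : v ≠ 0 := fun h0 ↦ hA.eigenvectorBasis.orthonormal.ne_zero i (by ext j; simp [v, h0])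
  have key : ((hA.eigenvalues i ^ 2 : ℝ) : 𝕜) • v = (c : 𝕜) • v :=
    calc ((hA.eigenvalues i ^ 2 : ℝ) : 𝕜) • v = (A * A) *ᵥ v := by
          rw [← mulVec_mulVec, hA.mulVec_eigenvectorBasis, mulVec_smul,
            hA.mulVec_eigenvectorBasis, smul_smul, ← RCLike.real_smul_eq_coe_smul (K := 𝕜), sq]
      _ = (c : 𝕜) • v := by rw [h, smul_mulVec, one_mulVec]
  exact_mod_cast smul_left_injective 𝕜 hv key

theorem exists_trace_eq_intCast_mul_sqrt (hA : A.IsHermitian) {c : ℝ} (hc : 0 ≤ c)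
    (h : A * A = (c : 𝕜) • 1) : ∃ k : ℤ, A.trace = ((k * √c : ℝ) : 𝕜) := by
  have hsign : ∀ i, ∃ s : ℤ, hA.eigenvalues i = s * √c := fun i ↦ by
    rcases sq_eq_sq_iff_eq_or_eq_neg.mp
      ((hA.eigenvalues_sq_of_mul_self_eq h i).trans (Real.sq_sqrt hc).symm) with h' | h'
    · exact ⟨1, by simp [h']⟩
    · exact ⟨-1, by simp [h']⟩
  choose s hs using hsign
  refine ⟨∑ i, s i, ?_⟩
  simp [hA.trace_eq_sum_eigenvalues, hs, Finset.sum_mul]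

theorem isSquare_card_of_mul_self_eq_of_trace_eq (hA : A.IsHermitian)
    (h : A * A = (Fintype.card n : 𝕜) • 1) (htr : A.trace = Fintype.card n) :
    IsSquare (Fintype.card n) := by
  set m := Fintype.card n
  obtain ⟨k, hk⟩ := hA.exists_trace_eq_intCast_mul_sqrt (Nat.cast_nonneg m)
    (by rw [h, RCLike.ofReal_natCast])
  have hkm : k * √(m : ℝ) = m := by
    exact_mod_cast (hk.symm.trans htr).trans (RCLike.ofReal_natCast m).symm
  rcases eq_or_ne m 0 with hm | hm
  · exact ⟨0, hm⟩
  have hk2 : (k ^ 2 : ℝ) = m := by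
    refine mul_right_cancel₀ (b := (m : ℝ)) (by exact_mod_cast hm) ?_
    calc (k ^ 2 : ℝ) * m = (k * √(m : ℝ)) ^ 2 := by
          rw [mul_pow, Real.sq_sqrt (Nat.cast_nonneg m)]
      _ = m * m := by rw [hkm, sq]
  exact ⟨k.natAbs, by zify; rw [abs_mul_abs_self, ← sq]; exact_mod_cast hk2.symm⟩

end Matrix.IsHermitian

theorem IsHadamard.mul_self_eq_of_conjTranspose_eq {n : ℕ} {H : Matrix (Fin n) (Fin n) ℂ}
    (hH : _root_.IsHadamard H) (hsa : Hᴴ = H) : H * H = (n : ℂ) • 1 := by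
  simpa [hsa] using hH.2

theorem not_isSquare_six : ¬ IsSquare 6 := by
  rintro ⟨r, hr⟩
  have : r ≤ 2 := by nlinarith
  interval_cases r <;> omega

/-- There is no self-adjoint dephased complex Hadamard matrix in
M₆(ℂ) whose diagonal is (1, 1, 1, 1, 1, 1). -/
theorem no_selfAdjoint_dephased_diag_stmt7 :
    ¬ ∃ H : Matrix (Fin 6) (Fin 6) ℂ,
      _root_.IsHadamard H ∧ Hᴴ = H ∧ IsDephased H ∧
      H 0 0 = 1 ∧ H 1 1 = 1 ∧ H 2 2 = 1 ∧
      H 3 3 = 1 ∧ H 4 4 = 1 ∧ H 5 5 = 1 := by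
  rintro ⟨H, hHad, hsa, -, h0, h1, h2, h3, h4, h5⟩
  have hHerm : H.IsHermitian := hsa
  have htr : H.trace = Fintype.card (Fin 6) := by
    norm_num [trace, Fin.sum_univ_six, h0, h1, h2, h3, h4, h5]
  have hsq : H * H = (Fintype.card (Fin 6) : ℂ) • 1 := by
    simpa using hHad.mul_self_eq_of_conjTranspose_eq hsa
  exact not_isSquare_six (by simpa using hHerm.isSquare_card_of_mul_self_eq_of_trace_eq hsq htr)
end

section
/- There is no self-adjoint dephased complex Hadamard matrix H ∈ M₆(ℂ) whose diagonal is (1, −1, −1, 1, 1, 1). -/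
/-!
If `H` is self-adjoint with `H Hᴴ = 6 • 1`, then `H ^ 2 = 6 • 1`, so every eigenvalue of `H` is
`±√6` and `trace H = k √6` for an integer `k`. The prescribed diagonal forces `trace H = 2`,
hence `6 k² = 4`, which has no integer solution.
-/

open Complex Matrix ComplexConjugate

namespace Matrix.IsHermitian

variable {𝕜 n : Type*} [RCLike 𝕜] [Fintype n] [DecidableEq n] {A : Matrix n n 𝕜}

theorem exists_trace_eq_intCast_mul_sqrt_of_mul_self_eq (hA : A.IsHermitian) {c : ℝ}
    (h : A * A = (c : 𝕜) • 1) : ∃ k : ℤ, A.trace = ((k * √c : ℝ) : 𝕜) := by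
  have hsign : ∀ i, ∃ s : ℤ, hA.eigenvalues i = s * √c := fun i ↦ by
    have hc : 0 ≤ c := hA.eigenvalues_sq_of_mul_self_eq h i ▸ sq_nonneg _
    rcases sq_eq_sq_iff_eq_or_eq_neg.1
      ((hA.eigenvalues_sq_of_mul_self_eq h i).trans (Real.sq_sqrt hc).symm) with hi | hi
    · exact ⟨1, by simp [hi]⟩
    · exact ⟨-1, by simp [hi]⟩
  choose s hs using hsign
  refine ⟨∑ i, s i, ?_⟩
  simp [hA.trace_eq_sum_eigenvalues, hs, Finset.sum_mul]

end Matrix.IsHermitian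

/-- There is no self-adjoint dephased complex Hadamard matrix in
M₆(ℂ) whose diagonal is (1, (-1), (-1), 1, 1, 1). -/
theorem no_selfAdjoint_dephased_diag_stmt9 :
    ¬ ∃ H : Matrix (Fin 6) (Fin 6) ℂ,
      _root_.IsHadamard H ∧ Hᴴ = H ∧ IsDephased H ∧
      H 0 0 = 1 ∧ H 1 1 = (-1) ∧ H 2 2 = (-1) ∧
      H 3 3 = 1 ∧ H 4 4 = 1 ∧ H 5 5 = 1 := by
  rintro ⟨H, ⟨-, horth⟩, hherm, -, h00, h11, h22, h33, h44, h55⟩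
  have hH : H.IsHermitian := hherm
  have hsq : H * H = ((6 : ℝ) : ℂ) • 1 := by
    rw [hherm] at horth
    exact_mod_cast horth
  obtain ⟨k, hk⟩ := hH.exists_trace_eq_intCast_mul_sqrt_of_mul_self_eq hsq
  have htrace : H.trace = 2 := by
    simp only [trace, diag, Fin.sum_univ_six, h00, h11, h22, h33, h44, h55]
    norm_num
  have hk2 : (k : ℝ) * √6 = 2 := Complex.ofReal_injective (by simpa using hk.symm.trans htrace)
  have hk4 : k ^ 2 * 6 = 4 := by
    have : ((k : ℝ) * √6) ^ 2 = 4 := by rw [hk2]; norm_num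
    rw [mul_pow, Real.sq_sqrt (by norm_num)] at this
    exact_mod_cast this
  omega
end

section
/- There is no self-adjoint dephased complex Hadamard matrix H ∈ M₆(ℂ) whose diagonal is (1, −1, −1, −1, −1, 1). -/
/-!
Since `H` is self-adjoint and `H Hᴴ = 6`, we have `H² = 6`, so `P = (H + √6)/(2√6)` is idempotent
and its trace is its rank, a natural number `r`. Hence `tr H = (2r - 6)√6`, while the prescribed
diagonal gives `tr H = -2`; squaring yields `4 = 6(2r - 6)²`, impossible in the integers.
-/

open Complex Matrix ComplexConjugate

namespace Matrix

variable {n K : Type*} [Fintype n] [DecidableEq n] [Field K]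

theorem IsIdempotentElem.exists_trace_eq_natCast {P : Matrix n n K} (hP : IsIdempotentElem P) :
    ∃ r : ℕ, P.trace = r := by
  have hf : IsIdempotentElem (toLin' P) := hP.map Matrix.toLinAlgEquiv'
  exact ⟨_, (trace_toLin'_eq P).symm.trans (LinearMap.IsIdempotentElem.isProj_range _ hf).trace⟩

theorem exists_trace_eq_of_mul_self_eq_smul_one [NeZero (2 : K)] {H : Matrix n n K} {s : K}
    (hs : s ≠ 0) (hH : H * H = (s * s) • 1) :
    ∃ r : ℕ, H.trace = (2 * r - Fintype.card n) * s := by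
  set P : Matrix n n K := (2 * s)⁻¹ • (H + s • 1)
  have hP : IsIdempotentElem P := by
    rw [IsIdempotentElem]
    simp only [P, Matrix.smul_mul, Matrix.mul_smul, Matrix.add_mul, Matrix.mul_add, hH,
      Matrix.one_mul, Matrix.mul_one, smul_smul, smul_add]
    match_scalars <;> field_simp <;> ring
  obtain ⟨r, hr⟩ := hP.exists_trace_eq_natCast
  refine ⟨r, ?_⟩
  simp only [P, trace_smul, trace_add, trace_one, smul_eq_mul] at hr
  field_simp at hr
  linear_combination hr

end Matrix

/-- There is no self-adjoint dephased complex Hadamard matrix in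
M₆(ℂ) whose diagonal is (1, (-1), (-1), (-1), (-1), 1). -/
theorem no_selfAdjoint_dephased_diag_stmt11 :
    ¬ ∃ H : Matrix (Fin 6) (Fin 6) ℂ,
      _root_.IsHadamard H ∧ Hᴴ = H ∧ IsDephased H ∧
      H 0 0 = 1 ∧ H 1 1 = (-1) ∧ H 2 2 = (-1) ∧
      H 3 3 = (-1) ∧ H 4 4 = (-1) ∧ H 5 5 = 1 := by
  rintro ⟨H, ⟨-, hHH⟩, hself, -, h00, h11, h22, h33, h44, h55⟩
  have hsqrt : ((√6 : ℝ) : ℂ) * (√6 : ℝ) = 6 := by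
    rw [← ofReal_mul, Real.mul_self_sqrt (by norm_num)]
    norm_num
  rw [hself, Nat.cast_ofNat, ← hsqrt] at hHH
  obtain ⟨r, hr⟩ := exists_trace_eq_of_mul_self_eq_smul_one (by simp) hHH
  have htrace : H.trace = -2 := by
    simp only [trace, diag, Fin.sum_univ_six, h00, h11, h22, h33, h44, h55]
    norm_num
  have hsq : ((4 : ℤ) : ℂ) = (((2 * r - 6) ^ 2 * 6 : ℤ) : ℂ) := by
    have h := htrace.symm.trans hr
    rw [Fintype.card_fin, Nat.cast_ofNat] at h
    push_cast
    linear_combination (-2 + (2 * r - 6 : ℂ) * (√6 : ℝ)) * h + (2 * r - 6 : ℂ) ^ 2 * hsqrt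
  have := Int.cast_injective hsq
  omega
end

section
/- There is no self-adjoint dephased complex Hadamard matrix H ∈ M₆(ℂ) whose diagonal is (1, −1, −1, −1, −1, −1). -/
open Complex Matrix ComplexConjugate

/-!
If `H` is self-adjoint and Hadamard of order `n`, then `H * H = n • 1`, so every eigenvalue of `H`
is `±√n` and `tr H = m √n` for some integer `m`. The prescribed diagonal gives `tr H = -4`, hence
`16 = 6 m²`, which has no integer solution.
-/

theorem Multiset.exists_int_mul_eq_sum_of_forall_eq_or_eq_neg {R : Type*} [Ring R] {c : R}
    (s : Multiset R) (hs : ∀ x ∈ s, x = c ∨ x = -c) : ∃ m : ℤ, s.sum = m * c := by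
  induction s using Multiset.induction_on with
  | empty => exact ⟨0, by simp⟩
  | cons a s ih =>
    obtain ⟨m, hm⟩ := ih fun x hx => hs x (Multiset.mem_cons_of_mem hx)
    rcases hs a (Multiset.mem_cons_self a s) with rfl | rfl
    · exact ⟨m + 1, by rw [Multiset.sum_cons, hm]; push_cast; noncomm_ring⟩
    · exact ⟨m - 1, by rw [Multiset.sum_cons, hm]; push_cast; noncomm_ring⟩

namespace Matrix

variable {n K : Type*} [Fintype n] [DecidableEq n] [Field K]

theorem eq_or_eq_neg_of_isRoot_charpoly_of_mul_self_eq {M : Matrix n n K} {c : K}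
    (hM : M * M = (c * c) • 1) {μ : K} (hμ : M.charpoly.IsRoot μ) : μ = c ∨ μ = -c := by
  have hdet : (μ • (1 : Matrix n n K) - M).det = 0 := by
    rwa [smul_one_eq_diagonal, ← scalar_apply, ← eval_charpoly]
  have hfactor : (μ • 1 - M) * (μ • 1 + M) = ((μ - c) * (μ + c)) • (1 : Matrix n n K) := by
    rw [sub_mul, mul_add, mul_add, hM]
    simp only [smul_mul_assoc, mul_smul_comm, one_mul, mul_one]
    module
  have hpow : ((μ - c) * (μ + c)) ^ Fintype.card n = 0 := by
    simpa [hdet] using congrArg det hfactor.symm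
  rcases mul_eq_zero.mp (pow_eq_zero_iff'.mp hpow).1 with h | h
  · exact .inl (sub_eq_zero.mp h)
  · exact .inr (eq_neg_of_add_eq_zero_left h)

theorem exists_int_mul_eq_trace_of_mul_self_eq [IsAlgClosed K] {M : Matrix n n K} {c : K}
    (hM : M * M = (c * c) • 1) : ∃ m : ℤ, M.trace = m * c := by
  rw [trace_eq_sum_roots_charpoly]
  refine Multiset.exists_int_mul_eq_sum_of_forall_eq_or_eq_neg _ fun μ hμ => ?_
  exact eq_or_eq_neg_of_isRoot_charpoly_of_mul_self_eq hM
    (Polynomial.isRoot_of_mem_roots hμ)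

end Matrix

/-- There is no self-adjoint dephased complex Hadamard matrix in
M₆(ℂ) whose diagonal is (1, (-1), (-1), (-1), (-1), (-1)). -/
theorem no_selfAdjoint_dephased_diag_stmt12 :
    ¬ ∃ H : Matrix (Fin 6) (Fin 6) ℂ,
      _root_.IsHadamard H ∧ Hᴴ = H ∧ IsDephased H ∧
      H 0 0 = 1 ∧ H 1 1 = (-1) ∧ H 2 2 = (-1) ∧
      H 3 3 = (-1) ∧ H 4 4 = (-1) ∧ H 5 5 = (-1) := by
  rintro ⟨H, ⟨-, hHH⟩, hsa, -, h00, h11, h22, h33, h44, h55⟩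
  obtain ⟨c, hc⟩ := IsAlgClosed.exists_eq_mul_self (6 : ℂ)
  have hsq : H * H = (c * c) • 1 := by
    rw [← hc]
    simpa [hsa] using hHH
  obtain ⟨m, hm⟩ := exists_int_mul_eq_trace_of_mul_self_eq hsq
  have htrace : H.trace = -4 := by
    rw [trace, Fin.sum_univ_six]
    simp only [diag_apply, h00, h11, h22, h33, h44, h55]
    norm_num
  have hm_sq : (m : ℂ) ^ 2 * 6 = 16 := by
    linear_combination (-(m : ℂ) * c + 4) * (htrace.symm.trans hm) + (m : ℂ) ^ 2 * hc
  have hm_sq_int : m ^ 2 * 6 = 16 := by exact_mod_cast hm_sq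
  omega
end

section
/- For every θ ∈ [−π, −arccos((−1+√3)/2)] ∪ [arccos((−1+√3)/2), π], the matrix H′(θ) is equivalent to H(θ); here H′(θ) is obtained from the same template as H(θ) but with the opposite sign of the square root: x′ = (1+2y+y² + √2·√(1+2y+2y³+y⁴))/(1+2y−y²) and t′ = (1+2y+y² + √2·√(1+2y+2y³+y⁴))/(−1+2y+y²), with the same y = exp(iθ) and z = (1+2y−y²)/(y(−1+2y+y²)). -/
open Complex Matrix ComplexConjugate

/-- Equivalence of complex Hadamard matrices: `H₂ = P₁ D₁ H₁ D₂ P₂` for unitary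
diagonal matrices `D₁, D₂` and permutation matrices `P₁, P₂`. -/
def HadamardEquiv {n : ℕ} (H₁ H₂ : Matrix (Fin n) (Fin n) ℂ) : Prop :=
  ∃ (d₁ d₂ : Fin n → ℂ) (σ₁ σ₂ : Equiv.Perm (Fin n)),
    (∀ i, ‖d₁ i‖ = 1) ∧ (∀ i, ‖d₂ i‖ = 1) ∧
    H₂ = (σ₁.permMatrix ℂ) * Matrix.diagonal d₁ * H₁ * Matrix.diagonal d₂ * (σ₂.permMatrix ℂ)

/-- The parameter set `[−π, −arccos((−1+√3)/2)] ∪ [arccos((−1+√3)/2), π]`. -/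
noncomputable def ThetaSet : Set ℝ :=
  Set.Icc (-Real.pi) (-(Real.arccos ((-1 + Real.sqrt 3) / 2))) ∪
    Set.Icc (Real.arccos ((-1 + Real.sqrt 3) / 2)) Real.pi

/-- `y = exp(iθ)`. -/
noncomputable def Hy (θ : ℝ) : ℂ := Complex.exp (θ * Complex.I)

/-- `z = (1+2y−y²)/(y(−1+2y+y²))`. -/
noncomputable def Hz (θ : ℝ) : ℂ :=
  (1 + 2 * Hy θ - (Hy θ) ^ 2) / (Hy θ * (-1 + 2 * Hy θ + (Hy θ) ^ 2))

/-- The square-root quantity `√2·√(1+2y+2y³+y⁴)` (principal branch of the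
complex square root, realized as the complex power `w ^ (1/2)`). -/
noncomputable def Hs (θ : ℝ) : ℂ :=
  (Real.sqrt 2 : ℂ) * (1 + 2 * Hy θ + 2 * (Hy θ) ^ 3 + (Hy θ) ^ 4) ^ ((1 : ℂ) / 2)

/-- `x = (1+2y+y² − √2√(1+2y+2y³+y⁴))/(1+2y−y²)`. -/
noncomputable def Hx (θ : ℝ) : ℂ :=
  (1 + 2 * Hy θ + (Hy θ) ^ 2 - Hs θ) / (1 + 2 * Hy θ - (Hy θ) ^ 2)

/-- `t = (1+2y+y² − √2√(1+2y+2y³+y⁴))/(−1+2y+y²)`. -/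
noncomputable def Ht (θ : ℝ) : ℂ :=
  (1 + 2 * Hy θ + (Hy θ) ^ 2 - Hs θ) / (-1 + 2 * Hy θ + (Hy θ) ^ 2)

/-- The matrix `H(θ)`. -/
noncomputable def Hmat (θ : ℝ) : Matrix (Fin 6) (Fin 6) ℂ :=
  !![1, 1, 1, 1, 1, 1;
     1, -1, conj (Hx θ), -(Hy θ), -(conj (Hx θ)), Hy θ;
     1, Hx θ, -1, Ht θ, -(Ht θ), -(Hx θ);
     1, -(conj (Hy θ)), conj (Ht θ), -1, conj (Hy θ), -(conj (Ht θ));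
     1, -(Hx θ), -(conj (Ht θ)), Hy θ, 1, conj (Hz θ);
     1, conj (Hy θ), -(conj (Hx θ)), -(Ht θ), Hz θ, 1]

/-- `x′ = (1+2y+y² + √2√(1+2y+2y³+y⁴))/(1+2y−y²)`. -/
noncomputable def Hx' (θ : ℝ) : ℂ :=
  (1 + 2 * Hy θ + (Hy θ) ^ 2 + Hs θ) / (1 + 2 * Hy θ - (Hy θ) ^ 2)

/-- `t′ = (1+2y+y² + √2√(1+2y+2y³+y⁴))/(−1+2y+y²)`. -/
noncomputable def Ht' (θ : ℝ) : ℂ :=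
  (1 + 2 * Hy θ + (Hy θ) ^ 2 + Hs θ) / (-1 + 2 * Hy θ + (Hy θ) ^ 2)

/-- The matrix `H′(θ)`, with the opposite sign of the square root. -/
noncomputable def Hmat' (θ : ℝ) : Matrix (Fin 6) (Fin 6) ℂ :=
  !![1, 1, 1, 1, 1, 1;
     1, -1, conj (Hx' θ), -(Hy θ), -(conj (Hx' θ)), Hy θ;
     1, Hx' θ, -1, Ht' θ, -(Ht' θ), -(Hx' θ);
     1, -(conj (Hy θ)), conj (Ht' θ), -1, conj (Hy θ), -(conj (Ht' θ));
     1, -(Hx' θ), -(conj (Ht' θ)), Hy θ, 1, conj (Hz θ);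
     1, conj (Hy θ), -(conj (Hx' θ)), -(Ht' θ), Hz θ, 1]

/-! On the parameter set, `1 + 2y + 2y³ + y⁴ = r y²` with `r = 4cos²θ + 4cosθ - 2 ≤ 0`,
so the square root `s` satisfies `s̄ = -s ȳ²`. Consequently `x̄ = t′ = 1/x` and
`t̄ = x′ = 1/t`: the entries `x, t` are unimodular, and `H′(θ)` is the same pattern as `H(θ)`
with `(x, t)` replaced by `(t̄, x̄)`. For unimodular `x, t, y` and `z = t/(xy)` that
substitution is undone by a simultaneous permutation of rows and columns together with
diagonal phases. -/

theorem Complex.norm_eq_one_of_mul_conj_eq_one {z : ℂ} (h : z * conj z = 1) :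
    ‖z‖ = 1 := by
  rw [Complex.mul_conj'] at h
  exact (pow_eq_one_iff_of_nonneg (norm_nonneg z) two_ne_zero).1 (by exact_mod_cast h)

theorem Complex.conj_eq_neg_mul_conj_sq_of_sq_eq {s u : ℂ} {r : ℝ} (hr : r ≤ 0)
    (hu : ‖u‖ = 1) (h : s ^ 2 = r * u ^ 2) : conj s = -s * conj u ^ 2 := by
  rcases eq_or_ne s 0 with rfl | hs
  · simp
  have hnorm : (‖s‖ : ℂ) ^ 2 = -r := by
    rw [← Complex.ofReal_pow, ← norm_pow, h, norm_mul, norm_pow, hu, Complex.norm_real,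
      Real.norm_of_nonpos hr]
    simp
  have huu : u * conj u = 1 := by simp [Complex.mul_conj', hu]
  apply mul_left_cancel₀ hs
  -- `s̄ s = ‖s‖² = ‖s²‖ = -r = -s² ū²`
  linear_combination
    Complex.mul_conj' s + hnorm + conj u ^ 2 * h + r * (u * conj u + 1) * huu

theorem one_add_two_mul_sub_sq_ne_zero {y : ℂ} (hy : ‖y‖ = 1) : 1 + 2 * y - y ^ 2 ≠ 0 := by
  have hyy : y * conj y = 1 := by simp [Complex.mul_conj', hy]
  intro h
  have h' : conj y + 2 - y = 0 := by linear_combination conj y * h + (y - 2) * hyy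
  simpa using congrArg Complex.re h'

theorem neg_one_add_two_mul_add_sq_ne_zero {y : ℂ} (hy : ‖y‖ = 1) :
    -1 + 2 * y + y ^ 2 ≠ 0 := by
  have hyy : y * conj y = 1 := by simp [Complex.mul_conj', hy]
  intro h
  have h' : -conj y + 2 + y = 0 := by linear_combination conj y * h - (y + 2) * hyy
  simpa using congrArg Complex.re h'

theorem hadamardEquiv_of_apply_eq {n : ℕ} {H₁ H₂ : Matrix (Fin n) (Fin n) ℂ}
    (σ τ : Equiv.Perm (Fin n)) (d₁ d₂ : Fin n → ℂ) (hd₁ : ∀ i, ‖d₁ i‖ = 1)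
    (hd₂ : ∀ j, ‖d₂ j‖ = 1) (h : ∀ i j, H₂ i j = d₁ i * H₁ (σ i) (τ j) * d₂ j) :
    HadamardEquiv H₁ H₂ := by
  refine ⟨d₁ ∘ σ.symm, d₂ ∘ τ.symm, σ, τ.symm, fun i => hd₁ _, fun j => hd₂ _, ?_⟩
  ext i j
  rw [PEquiv.mul_toMatrix_toPEquiv, Matrix.mul_assoc (σ.permMatrix ℂ),
    PEquiv.toMatrix_toPEquiv_mul]
  simp [Matrix.mul_diagonal, Matrix.diagonal_mul, h]

def hadamardTemplate (x t y z : ℂ) : Matrix (Fin 6) (Fin 6) ℂ :=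
  !![1, 1, 1, 1, 1, 1;
     1, -1, conj x, -y, -conj x, y;
     1, x, -1, t, -t, -x;
     1, -conj y, conj t, -1, conj y, -conj t;
     1, -x, -conj t, y, 1, conj z;
     1, conj y, -conj x, -t, z, 1]

def templatePerm : Equiv.Perm (Fin 6) := c[0, 3, 4, 2, 5, 1]

theorem templatePerm_apply : ∀ i, templatePerm i = ![3, 0, 5, 4, 2, 1] i := by decide

theorem hadamardEquiv_hadamardTemplate_conj_swap {x t y : ℂ} (hx : ‖x‖ = 1) (ht : ‖t‖ = 1)
    (hy : ‖y‖ = 1) :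
    HadamardEquiv (hadamardTemplate (conj t) (conj x) y (t / (x * y)))
      (hadamardTemplate x t y (t / (x * y))) := by
  have hx0 : x ≠ 0 := norm_ne_zero_iff.mp (by simp [hx])
  have ht0 : t ≠ 0 := norm_ne_zero_iff.mp (by simp [ht])
  have hy0 : y ≠ 0 := norm_ne_zero_iff.mp (by simp [hy])
  refine hadamardEquiv_of_apply_eq templatePerm templatePerm ![-1, 1, -x, conj y, x, -conj y]
    ![1, -1, conj x, -y, -conj x, y] ?_ ?_ ?_
  · intro i; fin_cases i <;> simp [hx, hy]
  · intro j; fin_cases j <;> simp [hx, hy]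
  · intro i j
    fin_cases i <;> fin_cases j <;>
      simp [hadamardTemplate, templatePerm_apply, map_div₀, ← Complex.inv_eq_conj, hx, ht,
        hy] <;>
      field_simp

theorem four_mul_cos_sq_add_four_mul_cos_sub_two_nonpos {θ : ℝ} (hθ : θ ∈ ThetaSet) :
    4 * Real.cos θ ^ 2 + 4 * Real.cos θ - 2 ≤ 0 := by
  have h3 : Real.sqrt 3 ^ 2 = 3 := Real.sq_sqrt (by norm_num)
  have h3n : 0 ≤ Real.sqrt 3 := Real.sqrt_nonneg 3
  have ha : Real.cos (Real.arccos ((-1 + Real.sqrt 3) / 2)) = (-1 + Real.sqrt 3) / 2 :=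
    Real.cos_arccos (by nlinarith) (by nlinarith)
  have hcos : Real.cos θ ≤ (-1 + Real.sqrt 3) / 2 := by
    rcases hθ with ⟨h₁, h₂⟩ | ⟨h₁, h₂⟩
    · rw [← Real.cos_neg, ← ha]
      exact Real.cos_le_cos_of_nonneg_of_le_pi (Real.arccos_nonneg _) (by linarith)
        (by linarith)
    · rw [← ha]
      exact Real.cos_le_cos_of_nonneg_of_le_pi (Real.arccos_nonneg _) h₂ h₁
  -- the roots of `4c² + 4c - 2` are `(-1 ± √3)/2`, and `cos θ ≥ -1 > (-1 - √3)/2`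
  nlinarith [mul_nonneg (sub_nonneg.2 hcos) (by nlinarith [Real.neg_one_le_cos θ] :
    (0 : ℝ) ≤ Real.cos θ - (-1 - Real.sqrt 3) / 2)]

theorem norm_Hy (θ : ℝ) : ‖Hy θ‖ = 1 := by
  simp [Hy, Complex.norm_exp]

theorem quartic_eq_mul_Hy_sq (θ : ℝ) : 1 + 2 * Hy θ + 2 * Hy θ ^ 3 + Hy θ ^ 4
    = ((4 * Real.cos θ ^ 2 + 4 * Real.cos θ - 2 : ℝ) : ℂ) * Hy θ ^ 2 := by
  have hcos : Complex.cos θ = (Hy θ + (Hy θ)⁻¹) / 2 := by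
    rw [Complex.cos, Hy, ← Complex.exp_neg]
    ring_nf
  have hy : Hy θ ≠ 0 := Complex.exp_ne_zero _
  push_cast
  rw [hcos]
  field_simp
  ring

theorem Hs_sq (θ : ℝ) : Hs θ ^ 2 = 2 * (1 + 2 * Hy θ + 2 * Hy θ ^ 3 + Hy θ ^ 4) := by
  rw [Hs, mul_pow, one_div, Complex.cpow_ofNat_inv_pow, ← Complex.ofReal_pow,
    Real.sq_sqrt zero_le_two]
  push_cast
  ring

theorem conj_Hs {θ : ℝ} (hθ : θ ∈ ThetaSet) : conj (Hs θ) = -Hs θ * conj (Hy θ) ^ 2 := by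
  refine Complex.conj_eq_neg_mul_conj_sq_of_sq_eq
    (r := 2 * (4 * Real.cos θ ^ 2 + 4 * Real.cos θ - 2)) ?_ (norm_Hy θ) ?_
  · linarith [four_mul_cos_sq_add_four_mul_cos_sub_two_nonpos hθ]
  · rw [Hs_sq, quartic_eq_mul_Hy_sq]
    push_cast
    ring

theorem Hx_mul_Ht' (θ : ℝ) : Hx θ * Ht' θ = 1 := by
  have hD := one_add_two_mul_sub_sq_ne_zero (norm_Hy θ)
  have hD' := neg_one_add_two_mul_add_sq_ne_zero (norm_Hy θ)
  rw [Hx, Ht', div_mul_div_comm, div_eq_one_iff_eq (mul_ne_zero hD hD')]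
  linear_combination -Hs_sq θ

theorem Ht_mul_Hx' (θ : ℝ) : Ht θ * Hx' θ = 1 := by
  have hD := one_add_two_mul_sub_sq_ne_zero (norm_Hy θ)
  have hD' := neg_one_add_two_mul_add_sq_ne_zero (norm_Hy θ)
  rw [Ht, Hx', div_mul_div_comm, div_eq_one_iff_eq (mul_ne_zero hD' hD)]
  linear_combination -Hs_sq θ

theorem conj_Hx {θ : ℝ} (hθ : θ ∈ ThetaSet) : conj (Hx θ) = Ht' θ := by
  have hy : Hy θ ≠ 0 := Complex.exp_ne_zero _
  have hD := one_add_two_mul_sub_sq_ne_zero (norm_Hy θ)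
  have hD' := neg_one_add_two_mul_add_sq_ne_zero (norm_Hy θ)
  rw [Hx, Ht', map_div₀, div_eq_div_iff ((map_ne_zero _).2 hD) hD']
  simp [conj_Hs hθ, ← Complex.inv_eq_conj (norm_Hy θ), map_ofNat]
  field_simp
  ring

theorem conj_Ht {θ : ℝ} (hθ : θ ∈ ThetaSet) : conj (Ht θ) = Hx' θ := by
  have hy : Hy θ ≠ 0 := Complex.exp_ne_zero _
  have hD := one_add_two_mul_sub_sq_ne_zero (norm_Hy θ)
  have hD' := neg_one_add_two_mul_add_sq_ne_zero (norm_Hy θ)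
  rw [Ht, Hx', map_div₀, div_eq_div_iff ((map_ne_zero _).2 hD') hD]
  simp [conj_Hs hθ, ← Complex.inv_eq_conj (norm_Hy θ), map_ofNat]
  field_simp
  ring

theorem norm_Hx {θ : ℝ} (hθ : θ ∈ ThetaSet) : ‖Hx θ‖ = 1 :=
  Complex.norm_eq_one_of_mul_conj_eq_one (by rw [conj_Hx hθ, Hx_mul_Ht'])

theorem norm_Ht {θ : ℝ} (hθ : θ ∈ ThetaSet) : ‖Ht θ‖ = 1 :=
  Complex.norm_eq_one_of_mul_conj_eq_one (by rw [conj_Ht hθ, Ht_mul_Hx'])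

theorem Hz_eq_div (θ : ℝ) : Hz θ = Ht θ / (Hx θ * Hy θ) := by
  have hy : Hy θ ≠ 0 := Complex.exp_ne_zero _
  have hx : Hx θ ≠ 0 := left_ne_zero_of_mul_eq_one (Hx_mul_Ht' θ)
  have hD := one_add_two_mul_sub_sq_ne_zero (norm_Hy θ)
  have hD' := neg_one_add_two_mul_add_sq_ne_zero (norm_Hy θ)
  rw [eq_div_iff (mul_ne_zero hx hy), Hz, Ht, Hx]
  field_simp

/-- For every `θ` in the parameter set, `H′(θ)` is equivalent
to `H(θ)`. -/
theorem Hmat'_equiv_Hmat (θ : ℝ) (hθ : θ ∈ ThetaSet) :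
    HadamardEquiv (Hmat' θ) (Hmat θ) := by
  have hH : Hmat θ = hadamardTemplate (Hx θ) (Ht θ) (Hy θ) (Ht θ / (Hx θ * Hy θ)) := by
    rw [← Hz_eq_div]
    rfl
  have hH' : Hmat' θ =
      hadamardTemplate (conj (Ht θ)) (conj (Hx θ)) (Hy θ) (Ht θ / (Hx θ * Hy θ)) := by
    rw [conj_Ht hθ, conj_Hx hθ, ← Hz_eq_div]
    rfl
  rw [hH, hH']
  exact hadamardEquiv_hadamardTemplate_conj_swap (norm_Hx hθ) (norm_Ht hθ) (norm_Hy θ)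
end

section
/- Let x, y, z be complex numbers of absolute value 1 such that the three numbers (2 + x + ȳ)(2 + x + z̄)(1 + 2x̄ + yz), (2 + y + z̄)(2 + y + x̄)(1 + 2ȳ + zx), and (2 + z + x̄)(2 + z + ȳ)(1 + 2z̄ + xy) are all real. Then two of x, y, z must be equal (x = y or y = z or x = z). -/
/-!
On the unit circle conjugation is inversion, so clearing denominators turns the realness of each
product into the vanishing of a polynomial. The alternating combination of its three cyclic
instances is `(x-y)(y-z)(x-z)` times the symmetric polynomial `e₂ + e₁e₃ + e₃² - 7`, which must
therefore vanish if `x, y, z` are distinct. Comparing it with its conjugate gives `e₃² = 1` and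
then `Re e₁ = 3e₃`, which forces `x = y = z = e₃`.
-/

open Complex ComplexConjugate

section Polynomial

variable {R : Type*} [CommRing R]

/-- For unit `a, b, c` this is `a²bc (P - P̄)` with `P = (2+a+b̄)(2+a+c̄)(1+2ā+bc)`. -/
def productDefect (a b c : R) : R :=
  a * (2 * b + a * b + 1) * (2 * c + a * c + 1) * (a + 2 + a * b * c) -
    (2 * a + 1 + a * b) * (2 * a + 1 + a * c) * (b * c + 2 * a * b * c + 1)

def alternatingQuotient (x y z : R) : R :=
  x * y + y * z + z * x + (x + y + z) * (x * y * z) + (x * y * z) ^ 2 - 7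

theorem productDefect_alternating_sum (x y z : R) :
    (y - z) * productDefect x y z - (x - z) * productDefect y z x + (x - y) * productDefect z x y =
      (x - y) * (y - z) * (x - z) * alternatingQuotient x y z := by
  unfold productDefect alternatingQuotient
  ring

end Polynomial

theorem productDefect_eq_zero_of_im_eq_zero {a b c : ℂ} (ha : ‖a‖ = 1) (hb : ‖b‖ = 1)
    (hc : ‖c‖ = 1)
    (h : ((2 + a + conj b) * (2 + a + conj c) * (1 + 2 * conj a + b * c)).im = 0) :
    productDefect a b c = 0 := by
  have ha0 : a ≠ 0 := norm_ne_zero_iff.mp (by rw [ha]; norm_num)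
  have hb0 : b ≠ 0 := norm_ne_zero_iff.mp (by rw [hb]; norm_num)
  have hc0 : c ≠ 0 := norm_ne_zero_iff.mp (by rw [hc]; norm_num)
  have hreal := conj_eq_iff_im.mpr h
  simp only [map_mul, map_add, map_one, map_ofNat, conj_conj] at hreal
  rw [← inv_eq_conj ha, ← inv_eq_conj hb, ← inv_eq_conj hc] at hreal
  field_simp at hreal
  unfold productDefect
  linear_combination -hreal

theorem eq_one_of_re_add_re_add_re_eq_three {x y z : ℂ} (hx : ‖x‖ = 1) (hy : ‖y‖ = 1)
    (hz : ‖z‖ = 1) (h : x.re + y.re + z.re = 3) : x = 1 ∧ y = 1 ∧ z = 1 := by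
  have eq_one : ∀ w : ℂ, ‖w‖ = 1 → w.re = 1 → w = 1 := fun w hw hre =>
    ext hre (abs_re_eq_norm.mp (by rw [hre, hw, abs_one]))
  have := re_le_norm x
  have := re_le_norm y
  have := re_le_norm z
  exact ⟨eq_one x hx (by linarith), eq_one y hy (by linarith), eq_one z hz (by linarith)⟩

theorem eq_and_eq_of_alternatingQuotient_eq_zero {x y z : ℂ} (hx : ‖x‖ = 1) (hy : ‖y‖ = 1)
    (hz : ‖z‖ = 1) (h : alternatingQuotient x y z = 0) : x = y ∧ y = z := by
  have hx0 : x ≠ 0 := norm_ne_zero_iff.mp (by rw [hx]; norm_num)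
  have hy0 : y ≠ 0 := norm_ne_zero_iff.mp (by rw [hy]; norm_num)
  have hz0 : z ≠ 0 := norm_ne_zero_iff.mp (by rw [hz]; norm_num)
  unfold alternatingQuotient at h
  have h_conj := congrArg conj h
  simp only [map_sub, map_add, map_mul, map_pow, map_ofNat, map_zero] at h_conj
  rw [← inv_eq_conj hx, ← inv_eq_conj hy, ← inv_eq_conj hz] at h_conj
  field_simp at h_conj
  have hunit : (x * y * z) ^ 2 = 1 := by linear_combination (h - h_conj) / 8
  have hre : x * y * z * ((x + y + z) + conj (x + y + z)) = 6 := by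
    simp only [map_add, ← inv_eq_conj hx, ← inv_eq_conj hy, ← inv_eq_conj hz]
    field_simp
    linear_combination h - hunit
  rw [add_conj] at hre
  rcases sq_eq_one_iff.mp hunit with h1 | h1
  · rw [h1, one_mul] at hre
    have hre3 : x.re + y.re + z.re = 3 := by
      have : 2 * (x + y + z).re = 6 := by exact_mod_cast hre
      simp only [add_re] at this
      linarith
    obtain ⟨rfl, rfl, rfl⟩ := eq_one_of_re_add_re_add_re_eq_three hx hy hz hre3
    exact ⟨rfl, rfl⟩
  · rw [h1, neg_one_mul, neg_eq_iff_eq_neg] at hre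
    have hre3 : (-x).re + (-y).re + (-z).re = 3 := by
      have : 2 * (x + y + z).re = -6 := by exact_mod_cast hre
      simp only [add_re, neg_re] at this ⊢
      linarith
    obtain ⟨hx1, hy1, hz1⟩ := eq_one_of_re_add_re_add_re_eq_three (by rwa [norm_neg])
      (by rwa [norm_neg]) (by rwa [norm_neg]) hre3
    exact ⟨neg_inj.mp (hx1.trans hy1.symm), neg_inj.mp (hy1.trans hz1.symm)⟩

/-- If `x, y, z` are unit complex numbers such that the three
products `(2+x+ȳ)(2+x+z̄)(1+2x̄+yz)`, `(2+y+z̄)(2+y+x̄)(1+2ȳ+zx)` and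
`(2+z+x̄)(2+z+ȳ)(1+2z̄+xy)` are all real, then two of `x, y, z` are equal. -/
theorem two_equal_of_three_real_products (x y z : ℂ)
    (hx : ‖x‖ = 1) (hy : ‖y‖ = 1) (hz : ‖z‖ = 1)
    (h1 : ((2 + x + conj y) * (2 + x + conj z) * (1 + 2 * conj x + y * z)).im = 0)
    (h2 : ((2 + y + conj z) * (2 + y + conj x) * (1 + 2 * conj y + z * x)).im = 0)
    (h3 : ((2 + z + conj x) * (2 + z + conj y) * (1 + 2 * conj z + x * y)).im = 0) :
    x = y ∨ y = z ∨ x = z := by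
  have hprod : (x - y) * (y - z) * (x - z) * alternatingQuotient x y z = 0 := by
    rw [← productDefect_alternating_sum, productDefect_eq_zero_of_im_eq_zero hx hy hz h1,
      productDefect_eq_zero_of_im_eq_zero hy hz hx h2,
      productDefect_eq_zero_of_im_eq_zero hz hx hy h3]
    ring
  simp only [mul_eq_zero, sub_eq_zero] at hprod
  rcases hprod with ((hxy | hyz) | hxz) | hq
  · exact Or.inl hxy
  · exact Or.inr (Or.inl hyz)
  · exact Or.inr (Or.inr hxz)
  · exact Or.inl (eq_and_eq_of_alternatingQuotient_eq_zero hx hy hz hq).1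
end

section
/- Let x, z be complex numbers of absolute value 1 with x ≠ −1. If the product (2 + x + x̄)(2 + x + z̄)(1 + 2x̄ + xz) is real, then (x² − 1)(xz − 1)² = 0; in particular, if moreover x ≠ 1 then xz = 1. -/
/-!
Since `2 + x + x̄ = 2 + 2 Re x` is a nonzero real, the hypothesis says that
`Q = (2 + x + z̄)(1 + 2x̄ + xz)` is real. On the unit circle `x̄ = x⁻¹` and `z̄ = z⁻¹`, and
clearing denominators gives `x²z(Q - Q̄) = (x² - 1)(xz - 1)²`.
-/

open Complex ComplexConjugate

lemma Complex.re_ne_neg_one_of_norm_eq_one {x : ℂ} (hx : ‖x‖ = 1) (hxne : x ≠ -1) :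
    x.re ≠ -1 := by
  intro hre
  have him : x.im = 0 := abs_re_eq_norm.mp (by rw [hre, hx]; norm_num)
  exact hxne (Complex.ext (by simp [hre]) (by simp [him]))

lemma Complex.two_add_add_conj (x : ℂ) : 2 + x + conj x = ((2 + 2 * x.re : ℝ) : ℂ) := by
  rw [add_assoc, add_conj]
  push_cast
  rfl

lemma Complex.sq_sub_one_mul_mul_sub_one_sq_eq {x z : ℂ} (hx : ‖x‖ = 1) (hz : ‖z‖ = 1) :
    (x ^ 2 - 1) * (x * z - 1) ^ 2 =
      x ^ 2 * z * ((2 + x + conj z) * (1 + 2 * conj x + x * z)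
        - conj ((2 + x + conj z) * (1 + 2 * conj x + x * z))) := by
  have hx0 : x ≠ 0 := norm_ne_zero_iff.mp (by rw [hx]; exact one_ne_zero)
  have hz0 : z ≠ 0 := norm_ne_zero_iff.mp (by rw [hz]; exact one_ne_zero)
  simp only [map_mul, map_add, map_one, map_ofNat, conj_conj]
  rw [← inv_eq_conj hx, ← inv_eq_conj hz]
  field_simp
  ring

/-- If `x, z` are unit complex numbers, `x ≠ −1`, and
`(2+x+x̄)(2+x+z̄)(1+2x̄+xz)` is real, then `(x²−1)(xz−1)² = 0`; in particular,
if moreover `x ≠ 1`, then `xz = 1`. -/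
theorem case_x_eq_y_analysis (x z : ℂ)
    (hx : ‖x‖ = 1) (hz : ‖z‖ = 1) (hxne : x ≠ -1)
    (hreal : ((2 + x + conj x) * (2 + x + conj z) * (1 + 2 * conj x + x * z)).im = 0) :
    (x ^ 2 - 1) * (x * z - 1) ^ 2 = 0 ∧ (x ≠ 1 → x * z = 1) := by
  rw [two_add_add_conj, mul_assoc, im_ofReal_mul] at hreal
  have hQ := (mul_eq_zero.mp hreal).resolve_left fun h =>
    re_ne_neg_one_of_norm_eq_one hx hxne (by linarith)
  have key := sq_sub_one_mul_mul_sub_one_sq_eq hx hz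
  rw [conj_eq_iff_im.mpr hQ, sub_self, mul_zero] at key
  refine ⟨key, fun hx1 => ?_⟩
  have hsq : x ^ 2 - 1 ≠ 0 := sub_ne_zero.mpr (sq_ne_one_iff.mpr ⟨hx1, hxne⟩)
  have hxz : (x * z - 1) ^ 2 = 0 := (mul_eq_zero.mp key).resolve_left hsq
  exact sub_eq_zero.mp (pow_eq_zero_iff two_ne_zero |>.mp hxz)
end
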